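/- arXiv:1207.2401 — 8 statements merged into one kernel-verified Lean document; each statement's English description precedes it below -/
import Mathlib

section
/- With X_j = 1_{S_{j-1} ≥ 0, S_j ≥ 0} for the symmetric random walk, the sum T_m = X_1 + ... + X_{2m} takes values only in the set {0, 2, 4, ..., 2m}, i.e., T_m is always an even number between 0 and 2m. -/
/-- For any sample path of the symmetric random walk,
`T m = X 1 + ⋯ + X (2m)` takes values in `{0, 2, 4, …, 2m}`. -/
theorem stmt1 (ε : ℕ → ℤ) (hval : ∀ j, ε j = 1 ∨ ε j = -1)
    (S : ℕ → ℤ) (hS : ∀ k, S k = ∑ i ∈ Finset.range k, ε (i + 1))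
    (X : ℕ → ℕ) (hX : ∀ j, X j = if 0 ≤ S (j - 1) ∧ 0 ≤ S j then 1 else 0)
    (T : ℕ → ℕ) (hT : ∀ m, T m = ∑ j ∈ Finset.range (2 * m), X (j + 1))
    (m : ℕ) (hm : 1 ≤ m) :
    ∃ k ≤ m, T m = 2 * k := by
  have hstep : ∀ n, S (n + 1) = S n + ε (n + 1) := by
    intro n; rw [hS, hS, Finset.sum_range_succ]
  have heven : ∀ n : ℕ, Even (S n + n) := by
    intro n
    induction n with
    | zero => simp [hS]
    | succ n ih =>
      rcases ih with ⟨c, hc⟩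
      rcases hval (n + 1) with h | h
      · exact ⟨c + 1, by rw [hstep]; push_cast; omega⟩
      · exact ⟨c, by rw [hstep]; push_cast; omega⟩
  have hpair : ∀ j, X (2 * j + 1) + X (2 * j + 2)
      = 2 * (if 0 ≤ S (2 * j + 1) then 1 else 0) := by
    intro j
    have h1 := hstep (2 * j)
    have h2 : S (2 * j + 2) = S (2 * j + 1) + ε (2 * j + 2) := by
      have := hstep (2 * j + 1)
      rwa [show 2 * j + 1 + 1 = 2 * j + 2 by ring] at this
    have e1 := hval (2 * j + 1)
    have e2 := hval (2 * j + 2)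
    rw [hX (2 * j + 1), hX (2 * j + 2),
      show 2 * j + 1 - 1 = 2 * j by omega, show 2 * j + 2 - 1 = 2 * j + 1 by omega]
    by_cases h : 0 ≤ S (2 * j + 1)
    · have ho := heven (2 * j + 1)
      rcases ho with ⟨c, hc⟩
      have h1' : 1 ≤ S (2 * j + 1) := by push_cast at hc; omega
      have hS0 : 0 ≤ S (2 * j) := by rcases e1 with e | e <;> omega
      have hS2 : 0 ≤ S (2 * j + 2) := by rcases e2 with e | e <;> omega
      simp [h, hS0, hS2]
    · simp [h]
  have hsum : ∀ n : ℕ, ∑ j ∈ Finset.range (2 * n), X (j + 1)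
      = 2 * ∑ j ∈ Finset.range n, (if 0 ≤ S (2 * j + 1) then 1 else 0) := by
    intro n
    induction n with
    | zero => simp
    | succ n ih =>
      rw [show 2 * (n + 1) = 2 * n + 1 + 1 by ring, Finset.sum_range_succ,
        Finset.sum_range_succ, ih, Finset.sum_range_succ]
      have := hpair n
      rw [show 2 * n + 1 + 1 = 2 * n + 2 by ring]
      omega
  refine ⟨∑ j ∈ Finset.range m, (if 0 ≤ S (2 * j + 1) then 1 else 0), ?_, ?_⟩
  · calc ∑ j ∈ Finset.range m, (if 0 ≤ S (2 * j + 1) then 1 else 0)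
        ≤ ∑ _j ∈ Finset.range m, 1 := by
          apply Finset.sum_le_sum; intro i _; split <;> omega
      _ = m := by simp
  · rw [hT, hsum]
end

section
/- For the symmetric random walk, setting X̃_j = 1 - X_j where X_j = 1_{S_{j-1} ≥ 0, S_j ≥ 0}, one has X̃_j = 1_{S_{j-1} ≤ 0, S_j ≤ 0}, and the random vector (X̃_1, ..., X̃_n) has the same distribution as (X_1, ..., X_n). -/
open MeasureTheory ProbabilityTheory
open Classical in
noncomputable def nu : Measure ℤ :=
  (1/2 : ENNReal) • Measure.dirac 1 + (1/2 : ENNReal) • Measure.dirac (-1)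

open Classical in
lemma nu_apply (s : Set ℤ) :
    nu s = (if (1:ℤ) ∈ s then 1/2 else 0) + (if (-1:ℤ) ∈ s then 1/2 else 0) := by
  simp [nu, Measure.add_apply, Measure.smul_apply,
    Measure.dirac_apply' _ (MeasurableSet.of_discrete (s := s)), Set.indicator_apply,
    smul_eq_mul, mul_ite, mul_one, mul_zero]

instance : IsProbabilityMeasure nu := by
  constructor
  rw [nu_apply]
  simp only [Set.mem_univ, if_true]
  exact ENNReal.add_halves 1

example : (1:ENNReal) - 1/2 = 1/2 := by rw [ENNReal.sub_half ENNReal.one_ne_top]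

-- retry nu_neg
open Classical in
lemma nu_neg' (s : Set ℤ) : nu ((fun x : ℤ => -x) ⁻¹' s) = nu s := by
  rw [nu_apply, nu_apply]
  have h1 : ((1:ℤ) ∈ (fun x : ℤ => -x) ⁻¹' s) = ((-1:ℤ) ∈ s) := by simp
  have h2 : ((-1:ℤ) ∈ (fun x : ℤ => -x) ⁻¹' s) = ((1:ℤ) ∈ s) := by simp
  rw [h1, h2, add_comm]

lemma marg {Ω : Type*} [MeasurableSpace Ω] (μ : Measure Ω) [IsProbabilityMeasure μ]
    (f : Ω → ℤ) (hf : Measurable f) (hval : ∀ ω, f ω = 1 ∨ f ω = -1)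
    (hp : μ {ω | f ω = 1} = 1/2) (s : Set ℤ) : μ (f ⁻¹' s) = nu s := by
  have hm1 : MeasurableSet {ω | f ω = 1} := hf (MeasurableSet.of_discrete (s:={1}))
  have hneg : μ {ω | f ω = -1} = 1/2 := by
    have hc : {ω | f ω = -1} = {ω | f ω = 1}ᶜ := by
      ext ω; rcases hval ω with h | h <;> simp [h]
    rw [hc, prob_compl_eq_one_sub hm1, hp, ENNReal.sub_half ENNReal.one_ne_top]
  rw [nu_apply]
  by_cases h1 : (1:ℤ) ∈ s <;> by_cases h2 : (-1:ℤ) ∈ s <;>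
    simp only [h1, h2, if_true, if_false]
  · have he : f ⁻¹' s = Set.univ := by
      ext ω; rcases hval ω with h | h <;> simp [h, h1, h2]
    rw [he, measure_univ]
    exact (ENNReal.add_halves 1).symm
  · have he : f ⁻¹' s = {ω | f ω = 1} := by
      ext ω; rcases hval ω with h | h <;> simp [h, h1, h2]
    rw [he, hp, add_zero]
  · have he : f ⁻¹' s = {ω | f ω = -1} := by
      ext ω; rcases hval ω with h | h <;> simp [h, h1, h2]
    rw [he, hneg, zero_add]
  · have he : f ⁻¹' s = ∅ := by
      ext ω; rcases hval ω with h | h <;> simp [h, h1, h2]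
    rw [he, measure_empty, add_zero]

lemma joint {Ω : Type*} [MeasurableSpace Ω] (μ : Measure Ω) [IsProbabilityMeasure μ]
    (f : ℕ → Ω → ℤ) (hmeas : ∀ j, Measurable (f j))
    (hindep : iIndepFun f μ)
    (hmarg : ∀ j (s : Set ℤ), μ (f j ⁻¹' s) = nu s) (n : ℕ) :
    μ.map (fun ω (i : Fin n) => f (↑i + 1) ω) = Measure.pi (fun _ : Fin n => nu) := by
  have hfv : Measurable (fun ω (i : Fin n) => f (↑i + 1) ω) :=
    measurable_pi_lambda _ fun i => hmeas _
  refine (Measure.pi_eq fun s hs => ?_).symm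
  rw [Measure.map_apply hfv (MeasurableSet.univ_pi fun i => MeasurableSet.of_discrete)]
  classical
  set T : Finset ℕ := Finset.image (fun i : Fin n => (i : ℕ) + 1) Finset.univ with hT
  set sets : ℕ → Set ℤ := fun j =>
    if h : j - 1 < n ∧ 1 ≤ j then s ⟨j - 1, h.1⟩ else Set.univ with hsetsdef
  have hsets : ∀ i : Fin n, sets (↑i + 1) = s i := by
    intro i
    rw [hsetsdef]
    simp only []
    rw [dif_pos (show (↑i + 1) - 1 < n ∧ 1 ≤ (↑i:ℕ) + 1 from ⟨by simp [i.isLt], Nat.le_add_left 1 _⟩)]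
    exact congrArg s (Fin.ext rfl)
  have hpre : (fun ω (i : Fin n) => f (↑i + 1) ω) ⁻¹' (Set.pi Set.univ s)
      = ⋂ j ∈ T, f j ⁻¹' sets j := by
    ext ω
    simp only [Set.mem_preimage, Set.mem_pi, Set.mem_univ, forall_const, Set.mem_iInter, hT,
      Finset.mem_image, Finset.mem_univ, true_and, forall_exists_index]
    constructor
    · rintro h j i rfl
      rw [hsets i]; exact h i
    · intro h i
      rw [← hsets i]; exact h _ i rfl
  rw [hpre, hindep.measure_inter_preimage_eq_mul T (fun j _ => MeasurableSet.of_discrete)]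
  rw [hT, Finset.prod_image (fun i _ j _ h => Fin.ext (Nat.add_right_cancel h))]
  exact Finset.prod_congr rfl fun i _ => by rw [hsets i, hmarg]

def psum (n : ℕ) (v : Fin n → ℤ) (k : ℕ) : ℤ :=
  ∑ i ∈ Finset.range k, if h : i < n then v ⟨i, h⟩ else 0

def F (n : ℕ) (v : Fin n → ℤ) (i : Fin n) : ℝ :=
  if 0 ≤ psum n v ↑i ∧ 0 ≤ psum n v (↑i + 1) then 1 else 0

lemma measurable_psum (n k : ℕ) : Measurable (fun v : Fin n → ℤ => psum n v k) := by
  unfold psum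
  refine Finset.measurable_sum _ (fun i _ => ?_)
  by_cases h : i < n
  · simpa [h] using measurable_pi_apply (⟨i, h⟩ : Fin n)
  · simp only [h, dif_neg, not_false_iff]
    exact measurable_const

lemma measurable_F (n : ℕ) : Measurable (F n) := by
  refine measurable_pi_lambda _ (fun i => ?_)
  unfold F
  refine Measurable.ite ?_ measurable_const measurable_const
  have h1 : MeasurableSet {v : Fin n → ℤ | 0 ≤ psum n v ↑i} :=
    measurable_psum n ↑i (MeasurableSet.of_discrete (s := {x : ℤ | 0 ≤ x}))
  have h2 : MeasurableSet {v : Fin n → ℤ | 0 ≤ psum n v (↑i + 1)} :=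
    measurable_psum n ((i : ℕ) + 1) (MeasurableSet.of_discrete (s := {x : ℤ | 0 ≤ x}))
  exact h1.inter h2


/-- For the symmetric random walk, with
`X j = 1_{S (j-1) ≥ 0, S j ≥ 0}` and `X̃ j = 1 - X j`, one has
`X̃ j = 1_{S (j-1) ≤ 0, S j ≤ 0}` pointwise, and
`(X̃ 1, …, X̃ n)` has the same distribution as `(X 1, …, X n)`. -/
theorem stmt2 {Ω : Type*} [MeasurableSpace Ω] (μ : Measure Ω) [IsProbabilityMeasure μ]
    (ε : ℕ → Ω → ℤ) (hmeas : ∀ j, Measurable (ε j))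
    (hindep : iIndepFun ε μ)
    (hval : ∀ j ω, ε j ω = 1 ∨ ε j ω = -1)
    (hp : ∀ j, μ {ω | ε j ω = 1} = 1 / 2)
    (S : ℕ → Ω → ℤ) (hS : ∀ k ω, S k ω = ∑ i ∈ Finset.range k, ε (i + 1) ω)
    (X : ℕ → Ω → ℝ)
    (hX : ∀ j ω, X j ω = if 0 ≤ S (j - 1) ω ∧ 0 ≤ S j ω then 1 else 0)
    (Xt : ℕ → Ω → ℝ) (hXt : ∀ j ω, Xt j ω = 1 - X j ω) (n : ℕ) :
    (∀ j, 1 ≤ j → ∀ ω, Xt j ω = if S (j - 1) ω ≤ 0 ∧ S j ω ≤ 0 then 1 else 0) ∧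
      μ.map (fun ω => fun i : Fin n => Xt (i + 1) ω) =
        μ.map (fun ω => fun i : Fin n => X (i + 1) ω) := by
  have hstep : ∀ j, 1 ≤ j → ∀ ω, S j ω = S (j - 1) ω + ε j ω := by
    intro j hj ω
    have hj1 : j - 1 + 1 = j := by omega
    rw [hS, hS]
    calc ∑ i ∈ Finset.range j, ε (i + 1) ω
        = ∑ i ∈ Finset.range (j - 1 + 1), ε (i + 1) ω := by rw [hj1]
      _ = (∑ i ∈ Finset.range (j - 1), ε (i + 1) ω) + ε (j - 1 + 1) ω :=
          Finset.sum_range_succ _ _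
      _ = (∑ i ∈ Finset.range (j - 1), ε (i + 1) ω) + ε j ω := by rw [hj1]
  have part1 : ∀ j, 1 ≤ j → ∀ ω, Xt j ω = if S (j - 1) ω ≤ 0 ∧ S j ω ≤ 0 then 1 else 0 := by
    intro j hj ω
    have hb := hstep j hj ω
    rw [hXt, hX]
    rcases hval j ω with he | he <;> rw [he] at hb <;>
      split_ifs with h1 h2 <;> first | (exfalso; omega) | norm_num
  refine ⟨part1, ?_⟩
  -- joint law of ε vector
  have hlaw : μ.map (fun ω (i : Fin n) => ε (↑i + 1) ω) = Measure.pi (fun _ : Fin n => nu) :=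
    joint μ ε hmeas hindep
      (fun j s => marg μ (ε j) (hmeas j) (hval j) (hp j) s) n
  have hlaw' : μ.map (fun ω (i : Fin n) => -(ε (↑i + 1) ω)) = Measure.pi (fun _ : Fin n => nu) := by
    have hind' : iIndepFun (fun j ω => -(ε j ω)) μ :=
      hindep.comp (fun _ (x : ℤ) => -x) (fun _ => measurable_neg)
    refine joint μ (fun j ω => -(ε j ω)) (fun j => (hmeas j).neg) hind' (fun j s => ?_) n
    have hps : (fun ω => -(ε j ω)) ⁻¹' s = ε j ⁻¹' ((fun x : ℤ => -x) ⁻¹' s) := rfl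
    rw [hps, marg μ (ε j) (hmeas j) (hval j) (hp j), nu_neg']
  -- pointwise identification with F
  have hpsum : ∀ ω k, k ≤ n → psum n (fun i : Fin n => ε (↑i + 1) ω) k = S k ω := by
    intro ω k hk
    rw [hS]
    refine Finset.sum_congr rfl fun i hi => ?_
    rw [dif_pos (lt_of_lt_of_le (Finset.mem_range.mp hi) hk)]
  have hpsum' : ∀ ω k, k ≤ n →
      psum n (fun i : Fin n => -(ε (↑i + 1) ω)) k = -(S k ω) := by
    intro ω k hk
    rw [hS, ← Finset.sum_neg_distrib]
    refine Finset.sum_congr rfl fun i hi => ?_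
    rw [dif_pos (lt_of_lt_of_le (Finset.mem_range.mp hi) hk)]
  have hXeq : (fun ω => fun i : Fin n => X (↑i + 1) ω)
      = F n ∘ (fun ω (i : Fin n) => ε (↑i + 1) ω) := by
    funext ω i
    show X (↑i + 1) ω = F n (fun i : Fin n => ε (↑i + 1) ω) i
    rw [hX]
    unfold F
    rw [hpsum ω ↑i (le_of_lt i.isLt), hpsum ω (↑i + 1) i.isLt]
    rfl
  have hXteq : (fun ω => fun i : Fin n => Xt (↑i + 1) ω)
      = F n ∘ (fun ω (i : Fin n) => -(ε (↑i + 1) ω)) := by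
    funext ω i
    show Xt (↑i + 1) ω = F n (fun i : Fin n => -(ε (↑i + 1) ω)) i
    rw [part1 (↑i + 1) (Nat.le_add_left 1 _) ω]
    unfold F
    rw [hpsum' ω ↑i (le_of_lt i.isLt), hpsum' ω (↑i + 1) i.isLt]
    simp only [neg_nonneg, Nat.add_sub_cancel]
  have hεv : Measurable (fun ω (i : Fin n) => ε (↑i + 1) ω) :=
    measurable_pi_lambda _ fun i => hmeas _
  have hεv' : Measurable (fun ω (i : Fin n) => -(ε (↑i + 1) ω)) :=
    measurable_pi_lambda _ fun i => (hmeas _).neg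
  calc μ.map (fun ω => fun i : Fin n => Xt (↑i + 1) ω)
      = (μ.map (fun ω (i : Fin n) => -(ε (↑i + 1) ω))).map (F n) := by
        rw [hXteq, ← Measure.map_map (measurable_F n) hεv']
    _ = (Measure.pi (fun _ : Fin n => nu)).map (F n) := by rw [hlaw']
    _ = (μ.map (fun ω (i : Fin n) => ε (↑i + 1) ω)).map (F n) := by rw [hlaw]
    _ = μ.map (fun ω => fun i : Fin n => X (↑i + 1) ω) := by
        rw [Measure.map_map (measurable_F n) hεv, ← hXeq]
end

section
/- The expected value of W_m = (1/(2m)) Σ_{j=1}^{2m} 1_{S_{j-1} ≥ 0, S_j ≥ 0} equals 1/2 for every positive integer m. -/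
open MeasureTheory ProbabilityTheory

lemma key_half {Ω : Type*} [MeasurableSpace Ω] (μ : Measure Ω) [IsProbabilityMeasure μ]
    (ε : ℕ → Ω → ℤ) (hmeas : ∀ j, Measurable (ε j))
    (hindep : iIndepFun ε μ)
    (hval : ∀ j ω, ε j ω = 1 ∨ ε j ω = -1)
    (hp : ∀ j, μ {ω | ε j ω = 1} = 1 / 2)
    (j : ℕ) (hj : 1 ≤ j) :
    μ {ω | 0 ≤ ∑ i ∈ Finset.range (j-1), ε (i+1) ω ∧ 0 ≤ ∑ i ∈ Finset.range j, ε (i+1) ω}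
      = 1/2 := by
  classical
  have hone : ∀ k, MeasurableSet {ω | ε k ω = 1} := fun k =>
    (hmeas k) (measurableSet_singleton 1)
  have hsingle : ∀ k c, c = 1 ∨ c = -1 → μ {ω | ε k ω = c} = 1/2 := by
    intro k c hc
    rcases hc with rfl | rfl
    · exact hp k
    · have hset : {ω | ε k ω = -1} = {ω | ε k ω = 1}ᶜ := by
        ext ω; simp only [Set.mem_setOf_eq, Set.mem_compl_iff]
        rcases hval k ω with h | h <;> simp [h]
      rw [hset, prob_compl_eq_one_sub (hone k), hp k]
      rw [ENNReal.sub_eq_of_eq_add (by simp)]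
      rw [ENNReal.div_add_div_same]
      rw [one_add_one_eq_two]
      exact (ENNReal.div_self two_ne_zero ENNReal.ofNat_ne_top).symm
  -- cylinder measures
  have hcyl : ∀ w : ℕ → ℤ, (∀ i, i < j → (w i = 1 ∨ w i = -1)) →
      μ {ω | ∀ i, i < j → ε (i+1) ω = w i} = (1/2)^j := by
    intro w hw
    have hset : {ω | ∀ i, i < j → ε (i+1) ω = w i}
        = ⋂ k ∈ Finset.Icc 1 j, ε k ⁻¹' {w (k-1)} := by
      ext ω
      simp only [Set.mem_setOf_eq, Set.mem_iInter, Set.mem_preimage, Set.mem_singleton_iff,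
        Finset.mem_Icc]
      constructor
      · rintro h k ⟨hk1, hk2⟩
        have := h (k-1) (by omega)
        have hk : k - 1 + 1 = k := by omega
        rwa [hk] at this
      · intro h i hi
        have := h (i+1) ⟨by omega, by omega⟩
        simpa using this
    rw [hset, hindep.meas_biInter (fun k _ => ⟨{w (k-1)}, measurableSet_singleton _, rfl⟩)]
    have : ∀ k ∈ Finset.Icc 1 j, μ (ε k ⁻¹' {w (k-1)}) = 1/2 := by
      intro k hk
      rw [Finset.mem_Icc] at hk
      exact hsingle k _ (hw (k-1) (by omega))
    rw [Finset.prod_congr rfl this, Finset.prod_const, Nat.card_Icc]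
    norm_num
  -- the finite box of sign vectors
  set V : Finset (Fin j → ℤ) := Fintype.piFinset (fun _ => ({1, -1} : Finset ℤ)) with hV
  set ex : (Fin j → ℤ) → ℕ → ℤ := fun v i => if h : i < j then v ⟨i, h⟩ else 1 with hex
  set q : (Fin j → ℤ) → Prop := fun v =>
    0 ≤ ∑ i ∈ Finset.range (j-1), ex v i ∧ 0 ≤ ∑ i ∈ Finset.range j, ex v i with hqdef
  set C : (Fin j → ℤ) → Set Ω := fun v => {ω | ∀ i, i < j → ε (i+1) ω = ex v i} with hC
  have hmemV : ∀ v, v ∈ V ↔ ∀ i : Fin j, v i = 1 ∨ v i = -1 := by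
    intro v
    simp [hV, Fintype.mem_piFinset]
  have hCmeas : ∀ v, MeasurableSet (C v) := by
    intro v
    have : C v = ⋂ k ∈ Finset.Icc 1 j, ε k ⁻¹' {ex v (k-1)} := by
      ext ω
      simp only [hC, Set.mem_setOf_eq, Set.mem_iInter, Set.mem_preimage,
        Set.mem_singleton_iff, Finset.mem_Icc]
      constructor
      · rintro h k ⟨hk1, hk2⟩
        have := h (k-1) (by omega)
        have hk : k - 1 + 1 = k := by omega
        rwa [hk] at this
      · intro h i hi
        have := h (i+1) ⟨by omega, by omega⟩
        simpa using this
    rw [this]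
    exact Finset.measurableSet_biInter _ (fun k _ => (hmeas k) (measurableSet_singleton _))
  have hCμ : ∀ v ∈ V, μ (C v) = (1/2)^j := by
    intro v hv
    refine hcyl (ex v) ?_
    intro i hi
    simp only [hex, dif_pos hi]
    exact (hmemV v).1 hv ⟨i, hi⟩
  have hCdisj : Set.PairwiseDisjoint (↑V) C := by
    intro v hv v' hv' hvv'
    simp only [Function.onFun, Set.disjoint_left]
    intro ω hω hω'
    apply hvv'
    funext i
    have h1 := hω i.1 i.2
    have h2 := hω' i.1 i.2
    simp only [hex, dif_pos i.2] at h1 h2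
    exact h1.symm.trans h2
  have hsum_eq : ∀ (v : Fin j → ℤ) (ω : Ω), (∀ i, i < j → ε (i+1) ω = ex v i) →
      ∀ k, k ≤ j → ∑ i ∈ Finset.range k, ε (i+1) ω = ∑ i ∈ Finset.range k, ex v i := by
    intro v ω h k hk
    refine Finset.sum_congr rfl (fun i hi => ?_)
    rw [Finset.mem_range] at hi
    exact h i (by omega)
  -- the event as a disjoint union of cylinders
  have hA_eq : {ω | 0 ≤ ∑ i ∈ Finset.range (j-1), ε (i+1) ω ∧
        0 ≤ ∑ i ∈ Finset.range j, ε (i+1) ω}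
      = ⋃ v ∈ V.filter q, C v := by
    ext ω
    simp only [Set.mem_setOf_eq, Set.mem_iUnion, Finset.mem_filter, exists_prop]
    constructor
    · intro h
      set v : Fin j → ℤ := fun i => ε (i.1+1) ω with hvdef
      have hc : ∀ i, i < j → ε (i+1) ω = ex v i := by
        intro i hi
        simp only [hex]
        rw [dif_pos hi]
      refine ⟨v, ⟨?_, ?_⟩, hc⟩
      · exact (hmemV _).2 (fun i => hval (i.1+1) ω)
      · constructor
        · rw [← hsum_eq v ω hc (j-1) (by omega)]; exact h.1
        · rw [← hsum_eq v ω hc j le_rfl]; exact h.2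
    · rintro ⟨v, ⟨hvV, hq⟩, hCω⟩
      have hc : ∀ i, i < j → ε (i+1) ω = ex v i := hCω
      constructor
      · rw [hsum_eq v ω hc (j-1) (by omega)]; exact hq.1
      · rw [hsum_eq v ω hc j le_rfl]; exact hq.2
  have hμA : μ {ω | 0 ≤ ∑ i ∈ Finset.range (j-1), ε (i+1) ω ∧
        0 ≤ ∑ i ∈ Finset.range j, ε (i+1) ω}
      = (V.filter q).card * (1/2)^j := by
    rw [hA_eq, measure_biUnion_finset (hCdisj.subset (Finset.filter_subset _ _))
      (fun v _ => hCmeas v)]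
    rw [Finset.sum_congr rfl (fun v hv => hCμ v (Finset.mem_filter.1 hv).1),
      Finset.sum_const, nsmul_eq_mul]
  -- counting: the sign flip is a bijection between q and ¬q vectors in V
  have hnegV : ∀ v ∈ V, -v ∈ V := by
    intro v hv
    refine (hmemV _).2 (fun i => ?_)
    rcases (hmemV v).1 hv i with h | h <;> simp [h]
  have hnegsum : ∀ v ∈ V, ∀ k ≤ j,
      ∑ i ∈ Finset.range k, ex (-v) i = -∑ i ∈ Finset.range k, ex v i := by
    intro v hv k hk
    rw [← Finset.sum_neg_distrib]
    refine Finset.sum_congr rfl (fun i hi => ?_)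
    rw [Finset.mem_range] at hi
    have hij : i < j := by omega
    simp [hex, dif_pos hij]
  have hqneg : ∀ v ∈ V, (¬ q v ↔ q (-v)) := by
    intro v hv
    have h1 := hnegsum v hv (j-1) (by omega)
    have h2 := hnegsum v hv j le_rfl
    have hb : ∑ i ∈ Finset.range j, ex v i
        = ∑ i ∈ Finset.range (j-1), ex v i + ex v (j-1) := by
      have : j = (j-1) + 1 := by omega
      rw [this, Finset.sum_range_succ]
      congr 1 <;> omega
    have he : ex v (j-1) = 1 ∨ ex v (j-1) = -1 := by
      have hij : j - 1 < j := by omega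
      simpa [hex, dif_pos hij] using (hmemV v).1 hv ⟨j-1, hij⟩
    simp only [hqdef, h1, h2]
    omega
  have hcard_eq : (V.filter q).card = (V.filter (fun v => ¬ q v)).card := by
    refine Finset.card_bij' (fun v _ => -v) (fun v _ => -v) ?_ ?_ ?_ ?_
    · intro v hv
      rw [Finset.mem_filter] at hv
      show -v ∈ _
      rw [Finset.mem_filter]
      refine ⟨hnegV v hv.1, ?_⟩
      rw [hqneg (-v) (hnegV v hv.1), neg_neg]
      exact hv.2
    · intro v hv
      rw [Finset.mem_filter] at hv
      show -v ∈ _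
      rw [Finset.mem_filter]
      exact ⟨hnegV v hv.1, (hqneg v hv.1).1 hv.2⟩
    · intro v _; simp
    · intro v _; simp
  have hVcard : V.card = 2^j := by
    rw [hV, Fintype.card_piFinset]
    simp [Finset.card_insert_of_notMem]
  have h2N : 2 * (V.filter q).card = 2^j := by
    have := Finset.card_filter_add_card_filter_not (s := V) (p := q)
    omega
  have hN : (V.filter q).card = 2^(j-1) := by
    have hh : (2:ℕ)^j = 2 * 2^(j-1) := by
      conv_lhs => rw [show j = (j-1)+1 from by omega]
      rw [pow_succ]; ring
    omega
  have hpow : ((1:ENNReal)/2)^j = (1/2)^(j-1) * (1/2) := by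
    rw [← pow_succ]
    congr 1
    omega
  rw [hμA, hN, hpow]
  push_cast
  rw [← mul_assoc, ← mul_pow, one_div,
    ENNReal.mul_inv_cancel two_ne_zero ENNReal.ofNat_ne_top, one_pow, one_mul]

/-- `E[W m] = 1/2` where
`W m = (1/(2m)) ∑_{j=1}^{2m} 1_{S (j-1) ≥ 0, S j ≥ 0}`. -/
theorem stmt3 {Ω : Type*} [MeasurableSpace Ω] (μ : Measure Ω) [IsProbabilityMeasure μ]
    (ε : ℕ → Ω → ℤ) (hmeas : ∀ j, Measurable (ε j))
    (hindep : iIndepFun ε μ)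
    (hval : ∀ j ω, ε j ω = 1 ∨ ε j ω = -1)
    (hp : ∀ j, μ {ω | ε j ω = 1} = 1 / 2)
    (S : ℕ → Ω → ℤ) (hS : ∀ k ω, S k ω = ∑ i ∈ Finset.range k, ε (i + 1) ω)
    (X : ℕ → Ω → ℝ)
    (hX : ∀ j ω, X j ω = if 0 ≤ S (j - 1) ω ∧ 0 ≤ S j ω then 1 else 0)
    (W : ℕ → Ω → ℝ)
    (hW : ∀ m ω, W m ω = (1 / (2 * m)) * ∑ j ∈ Finset.range (2 * m), X (j + 1) ω)
    (m : ℕ) (hm : 1 ≤ m) :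
    ∫ ω, W m ω ∂μ = 1 / 2 := by
  have hSmeas : ∀ k, Measurable (S k) := by
    intro k
    have : S k = fun ω => ∑ i ∈ Finset.range k, ε (i+1) ω := funext (hS k)
    rw [this]
    exact Finset.measurable_sum _ (fun i _ => (hmeas (i+1)))
  set A : ℕ → Set Ω := fun j => {ω | 0 ≤ S (j-1) ω ∧ 0 ≤ S j ω} with hA
  have hAmeas : ∀ j, MeasurableSet (A j) := by
    intro j
    have h1 : MeasurableSet {ω | 0 ≤ S (j-1) ω} :=
      measurableSet_le measurable_const (hSmeas (j-1))
    have h2 : MeasurableSet {ω | 0 ≤ S j ω} :=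
      measurableSet_le measurable_const (hSmeas j)
    exact h1.inter h2
  have hAval : ∀ j, 1 ≤ j → μ (A j) = 1/2 := by
    intro j hj
    have heq : A j = {ω | 0 ≤ ∑ i ∈ Finset.range (j-1), ε (i+1) ω ∧
        0 ≤ ∑ i ∈ Finset.range j, ε (i+1) ω} := by
      ext ω; simp [hA, hS]
    rw [heq]
    exact key_half μ ε hmeas hindep hval hp j hj
  have hXind : ∀ j, X j = fun ω => (A j).indicator (fun _ => (1:ℝ)) ω := by
    intro j
    funext ω
    rw [hX j ω, Set.indicator_apply]
    rfl
  have hXinteg : ∀ j, Integrable (X j) μ := by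
    intro j
    rw [hXind j]
    exact (integrable_indicator_iff (hAmeas j)).2
      (integrableOn_const (measure_lt_top μ _).ne)
  have hXval : ∀ j, 1 ≤ j → ∫ ω, X j ω ∂μ = 1/2 := by
    intro j hj
    rw [hXind j]
    rw [MeasureTheory.integral_indicator_const _ (hAmeas j), measureReal_def, hAval j hj]
    simp [ENNReal.toReal_div]
  have hWeq : (fun ω => W m ω)
      = fun ω => (1/(2*(m:ℝ))) * ∑ j ∈ Finset.range (2*m), X (j+1) ω := by
    funext ω
    rw [hW m ω]
  rw [hWeq, MeasureTheory.integral_const_mul,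
    MeasureTheory.integral_finset_sum _ (fun j _ => hXinteg (j+1)),
    Finset.sum_congr rfl (fun j _ => hXval (j+1) (by omega)), Finset.sum_const,
    nsmul_eq_mul]
  have hm0 : (m:ℝ) ≠ 0 := by positivity
  push_cast
  field_simp
  simp [Finset.card_range]
end

section
/- (Chung–Feller Theorem) For the symmetric random walk, let R_m = (1/2) Σ_{j=1}^{2m} 1_{S_{j-1} ≥ 0, S_j ≥ 0}. Then for each integer k with 0 ≤ k ≤ m, P(R_m = k) = u_{2k} · u_{2m-2k}, where u_{2j} = C(2j, j) · 2^{-2j} is the probability that the walk is at 0 at time 2j. Equivalently, P(R_m = k) = 2^{-2m} C(2k, k) C(2m-2k, m-k). -/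
namespace CF

def step (b : Bool) : ℤ := cond b 1 (-1)

def psum (l : List Bool) : ℤ := (l.map step).sum

@[simp] lemma step_true : step true = 1 := rfl
@[simp] lemma step_false : step false = -1 := rfl

/-- number of counted steps starting from position `s` -/
def cnt : ℤ → List Bool → ℕ
  | _, [] => 0
  | s, b :: l => (if 0 ≤ s ∧ 0 ≤ s + step b then 1 else 0) + cnt (s + step b) l

/-- first index `j ≥ 1` at which the walk from `s` hits `0`; `len+1` if never -/
def frt : ℤ → List Bool → ℕ
  | _, [] => 1
  | s, b :: l => if s + step b = 0 then 1 else 1 + frt (s + step b) l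

/-- first index at which the walk from `s` hits `-1`; `len+1` if never -/
def hm1 : ℤ → List Bool → ℕ
  | _, [] => 1
  | s, b :: l => if s + step b = -1 then 1 else 1 + hm1 (s + step b) l

/-- flip the path after the first hit of `-1` -/
def refl : ℤ → List Bool → List Bool
  | _, [] => []
  | s, b :: l => if s + step b = -1 then b :: l.map not else b :: refl (s + step b) l

/-- all lists of `Bool` of length `n` -/
def L : ℕ → Finset (List Bool)
  | 0 => {[]}
  | n + 1 => (L n).image (List.cons true) ∪ (L n).image (List.cons false)

@[simp] lemma psum_nil : psum [] = 0 := rfl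
@[simp] lemma psum_cons (b : Bool) (l : List Bool) : psum (b :: l) = step b + psum l := rfl
@[simp] lemma psum_append (p q : List Bool) : psum (p ++ q) = psum p + psum q := by
  simp [psum]

lemma psum_map_not (l : List Bool) : psum (l.map not) = - psum l := by
  induction l with
  | nil => simp
  | cons b l ih => cases b <;> simp [step, ih] <;> ring

lemma psum_count (l : List Bool) : psum l = 2 * (l.count true : ℤ) - l.length := by
  induction l with
  | nil => simp
  | cons b l ih => cases b <;> simp [List.count_cons, ih, step] <;> push_cast <;> ring

lemma psum_parity (l : List Bool) : (2 : ℤ) ∣ psum l - l.length :=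
  ⟨(l.count true : ℤ) - l.length, by rw [psum_count]; ring⟩

lemma cnt_le_length (s : ℤ) (l : List Bool) : cnt s l ≤ l.length := by
  induction l generalizing s with
  | nil => simp [cnt]
  | cons b l ih =>
    simp only [cnt, List.length_cons]
    have := ih (s + step b)
    split <;> omega

lemma cnt_append (s : ℤ) (p q : List Bool) :
    cnt s (p ++ q) = cnt s p + cnt (s + psum p) q := by
  induction p generalizing s with
  | nil => simp [cnt]
  | cons b p ih =>
    simp only [List.cons_append, cnt, List.append_eq, ih, psum_cons]
    rw [show s + (step b + psum p) = s + step b + psum p from by ring]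
    omega

lemma frt_pos (s : ℤ) (l : List Bool) : 1 ≤ frt s l := by
  cases l with
  | nil => simp [frt]
  | cons b l => simp only [frt]; split <;> omega

lemma frt_le (s : ℤ) (l : List Bool) : frt s l ≤ l.length + 1 := by
  induction l generalizing s with
  | nil => simp [frt]
  | cons b l ih =>
    simp only [frt, List.length_cons]
    have := ih (s + step b)
    split <;> omega

lemma frt_append_of_le (s : ℤ) (p q : List Bool) (h : frt s p ≤ p.length) :
    frt s (p ++ q) = frt s p := by
  induction p generalizing s with
  | nil => simp [frt] at h
  | cons b p ih =>
    by_cases hs : s + step b = 0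
    · simp only [List.cons_append, frt, if_pos hs]
    · simp only [frt, List.length_cons, if_neg hs] at h
      simp only [List.cons_append, frt, if_neg hs, List.append_eq]
      rw [ih _ (by omega)]

lemma frt_of_append_le (s : ℤ) (p q : List Bool) (h : frt s (p ++ q) ≤ p.length) :
    frt s p = frt s (p ++ q) := by
  induction p generalizing s with
  | nil => simp only [List.nil_append, List.length_nil] at h; have := frt_pos s q; omega
  | cons b p ih =>
    by_cases hs : s + step b = 0
    · simp only [List.cons_append, frt, if_pos hs]
    · simp only [List.cons_append, frt, List.length_cons, if_neg hs, List.append_eq] at h ⊢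
      rw [ih _ (by omega)]

lemma frt_sum_eq_zero (s : ℤ) (l : List Bool) (h : frt s l ≤ l.length) :
    s + psum (l.take (frt s l)) = 0 := by
  induction l generalizing s with
  | nil => simp [frt] at h
  | cons b l ih =>
    simp only [frt, List.length_cons] at *
    by_cases hs : s + step b = 0
    · simp [frt, hs]
    · rw [if_neg hs] at h
      have h2 : frt (s + step b) l ≤ l.length := by omega
      have := ih _ h2
      simp only [frt, if_neg hs, Nat.add_comm 1, List.take_succ_cons, psum_cons]
      omega

lemma frt_le_of_sum_zero (s : ℤ) (l : List Bool) (hne : l ≠ []) (h : s + psum l = 0) :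
    frt s l ≤ l.length := by
  induction l generalizing s with
  | nil => simp at hne
  | cons b l ih =>
    simp only [frt, List.length_cons]
    by_cases hs : s + step b = 0
    · rw [if_pos hs]; omega
    · rw [if_neg hs]
      rcases eq_or_ne l [] with rfl | hne'
      · simp [step] at h hs; omega
      · have := ih (s + step b) hne' (by simp only [psum_cons] at h; omega)
        omega

lemma mem_L {n : ℕ} {l : List Bool} : l ∈ L n ↔ l.length = n := by
  induction n generalizing l with
  | zero => simp [L, List.length_eq_zero_iff]
  | succ n ih =>
    simp only [L, Finset.mem_union, Finset.mem_image]
    constructor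
    · rintro (⟨a, ha, rfl⟩ | ⟨a, ha, rfl⟩) <;> simp [ih.mp ha]
    · intro h
      cases l with
      | nil => simp at h
      | cons b l =>
        cases b
        · exact Or.inr ⟨l, ih.mpr (by simpa using h), rfl⟩
        · exact Or.inl ⟨l, ih.mpr (by simpa using h), rfl⟩

lemma L_succ_filter (n : ℕ) (p : List Bool → Prop) [DecidablePred p] :
    ((L (n+1)).filter p).card =
      ((L n).filter (fun l => p (true :: l))).card +
      ((L n).filter (fun l => p (false :: l))).card := by
  have hinj : ∀ b : Bool, Set.InjOn (List.cons b) (L n) := by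
    intro b x hx y hy hxy; simpa using hxy
  rw [L, Finset.filter_union, Finset.card_union_of_disjoint, Finset.filter_image,
    Finset.filter_image, Finset.card_image_of_injOn, Finset.card_image_of_injOn]
  · exact fun x hx y hy hxy => by simpa using hxy
  · exact fun x hx y hy hxy => by simpa using hxy
  · apply Finset.disjoint_filter_filter
    simp only [Finset.disjoint_left, Finset.mem_image]
    rintro a ⟨x, hx, rfl⟩ ⟨y, hy, h⟩
    simp at h

lemma count_card (n j : ℕ) :
    ((L n).filter (fun l => l.count true = j)).card = n.choose j := by
  induction n generalizing j with
  | zero =>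
    simp only [L]
    rw [Finset.filter_singleton]
    rcases eq_or_ne j 0 with rfl | hj
    · simp
    · simp only [List.count_nil]
      simp only [show ¬ (0 = j) by omega, ↓reduceIte]
      simp [Nat.choose_eq_zero_of_lt (Nat.pos_of_ne_zero hj)]
  | succ n ih =>
    rw [L_succ_filter]
    have e1 : ∀ l : List Bool, (true :: l).count true = l.count true + 1 :=
      fun l => List.count_cons_self
    have e2 : ∀ l : List Bool, (false :: l).count true = l.count true := by
      intro l; simp [List.count_cons]
    simp only [e1, e2]
    rcases eq_or_ne j 0 with rfl | hj
    · have h1 : (Finset.filter (fun l => List.count true l + 1 = 0) (L n)).card = 0 := by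
        rw [Finset.card_eq_zero, Finset.filter_eq_empty_iff]; intro l _; omega
      rw [h1, ih]; simp
    · obtain ⟨i, rfl⟩ := Nat.exists_eq_succ_of_ne_zero hj
      have h3 : Finset.filter (fun l : List Bool => l.count true + 1 = i.succ) (L n)
          = Finset.filter (fun l => l.count true = i) (L n) :=
        Finset.filter_congr (fun l _ => by omega)
      rw [h3, ih, ih, Nat.choose_succ_succ', Nat.add_comm]

lemma card_L (n : ℕ) : (L n).card = 2 ^ n := by
  induction n with
  | zero => simp [L]
  | succ n ih =>
    have h := L_succ_filter n (fun _ => True)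
    simp only [Finset.filter_true] at h
    rw [h, ih]; ring

/-- splitting lemma -/
lemma split_card (a b : ℕ) (P Q : List Bool → Prop) [DecidablePred P] [DecidablePred Q] :
    ((L (a + b)).filter (fun l => P (l.take a) ∧ Q (l.drop a))).card =
      ((L a).filter P).card * ((L b).filter Q).card := by
  classical
  rw [← Finset.card_product]
  refine Finset.card_bij' (fun l _ => (l.take a, l.drop a)) (fun p _ => p.1 ++ p.2)
    ?_ ?_ ?_ ?_
  · intro l hl
    simp only [Finset.mem_filter, mem_L] at hl
    simp only [Finset.mem_product, Finset.mem_filter, mem_L]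
    exact ⟨⟨by rw [List.length_take]; omega, hl.2.1⟩, by rw [List.length_drop]; omega, hl.2.2⟩
  · intro p hp
    simp only [Finset.mem_product, Finset.mem_filter, mem_L] at hp
    have h1 : List.take a (p.1 ++ p.2) = p.1 := List.take_left' hp.1.1
    have h2 : List.drop a (p.1 ++ p.2) = p.2 := List.drop_left' hp.1.1
    simp only [Finset.mem_filter, mem_L, h1, h2]
    exact ⟨by simp [hp.1.1, hp.2.1], hp.1.2, hp.2.2⟩
  · intro l hl; simp
  · intro p hp
    simp only [Finset.mem_product, Finset.mem_filter, mem_L] at hp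
    simp [List.take_left' hp.1.1, List.drop_left' hp.1.1]

/-! ### hitting -1, reflection -/

@[simp] lemma length_refl (s : ℤ) (l : List Bool) : (refl s l).length = l.length := by
  induction l generalizing s with
  | nil => rfl
  | cons b l ih =>
    simp only [refl]
    split <;> simp [ih]

lemma hm1_pos (s : ℤ) (l : List Bool) : 1 ≤ hm1 s l := by
  cases l with
  | nil => simp [hm1]
  | cons b l => simp only [hm1]; split <;> omega

lemma hm1_refl (s : ℤ) (l : List Bool) : hm1 s (refl s l) = hm1 s l := by
  induction l generalizing s with
  | nil => rfl
  | cons b l ih =>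
    by_cases hs : s + step b = -1
    · simp [refl, hm1, hs]
    · simp only [refl, if_neg hs, hm1, ih]

lemma refl_refl (s : ℤ) (l : List Bool) (h : hm1 s l ≤ l.length) :
    refl s (refl s l) = l := by
  induction l generalizing s with
  | nil => simp [hm1] at h
  | cons b l ih =>
    by_cases hs : s + step b = -1
    · simp only [refl, if_pos hs, List.map_map]
      have : (not ∘ not) = id := funext fun x => Bool.not_not x
      simp [this]
    · simp only [hm1, if_neg hs, List.length_cons] at h
      simp only [refl, if_neg hs, List.cons.injEq, true_and]
      exact ih _ (by omega)

lemma psum_refl (s : ℤ) (l : List Bool) (h : hm1 s l ≤ l.length) :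
    s + psum (refl s l) = -2 - (s + psum l) := by
  induction l generalizing s with
  | nil => simp [hm1] at h
  | cons b l ih =>
    by_cases hs : s + step b = -1
    · simp only [refl, if_pos hs, psum_cons, psum_map_not]
      omega
    · simp only [hm1, if_neg hs, List.length_cons] at h
      have := ih (s + step b) (by omega)
      simp only [refl, if_neg hs, psum_cons]
      omega

/-- a walk ending at `≤ -2` (from `s ≥ 0`) must hit `-1` -/
lemma hm1_le_of_low (s : ℤ) (l : List Bool) (hs : 0 ≤ s) (h : s + psum l ≤ -2) :
    hm1 s l ≤ l.length := by
  induction l generalizing s with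
  | nil => simp at h; omega
  | cons b l ih =>
    by_cases hb : s + step b = -1
    · simp [hm1, hb]
    · have hb2 : 0 ≤ s + step b := by
        cases b <;> simp [step] at hb ⊢ <;> omega
      simp only [hm1, if_neg hb, List.length_cons]
      have := ih (s + step b) hb2 (by simp only [psum_cons] at h; omega)
      omega

/-- never hitting `-1` from `s ≥ 0` means every step is counted -/
lemma cnt_eq_length_of_no_hit (s : ℤ) (l : List Bool) (hs : 0 ≤ s)
    (h : l.length < hm1 s l) : cnt s l = l.length ∧ 0 ≤ s + psum l := by
  induction l generalizing s with
  | nil => simp [cnt]; omega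
  | cons b l ih =>
    simp only [hm1, List.length_cons] at h
    split at h
    · omega
    · rename_i hb
      have hb2 : 0 ≤ s + step b := by
        cases b <;> simp [step] at hb ⊢ <;> omega
      obtain ⟨h1, h2⟩ := ih (s + step b) hb2 (by omega)
      refine ⟨?_, by simp only [psum_cons]; omega⟩
      simp only [cnt, if_pos (show (0:ℤ) ≤ s ∧ 0 ≤ s + step b from ⟨hs, hb2⟩), h1,
        List.length_cons]
      omega

/-- all steps counted means it never hits `-1` -/
lemma no_hit_of_cnt_eq_length (s : ℤ) (l : List Bool) (hs : 0 ≤ s)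
    (h : cnt s l = l.length) : l.length < hm1 s l := by
  induction l generalizing s with
  | nil => simp [hm1]
  | cons b l ih =>
    simp only [cnt, List.length_cons] at h
    have hle := cnt_le_length (s + step b) l
    by_cases hb2 : 0 ≤ s + step b
    · rw [if_pos ⟨hs, hb2⟩] at h
      have := ih (s + step b) hb2 (by omega)
      simp only [hm1, if_neg (by omega : ¬ s + step b = -1), List.length_cons]
      omega
    · rw [if_neg (fun hx => hb2 hx.2)] at h
      omega

lemma map_not_not (l : List Bool) : (l.map not).map not = l := by
  rw [List.map_map]
  have : (not ∘ not) = id := funext fun x => Bool.not_not x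
  simp [this]

lemma card_flip (n : ℕ) (P Q : List Bool → Prop) [DecidablePred P] [DecidablePred Q]
    (h : ∀ l, l.length = n → (P l ↔ Q (l.map not))) :
    ((L n).filter P).card = ((L n).filter Q).card := by
  refine Finset.card_bij' (fun l _ => l.map not) (fun l _ => l.map not) ?_ ?_ ?_ ?_ <;>
    intro l hl <;> simp only [Finset.mem_filter, mem_L] at hl ⊢
  · exact ⟨by simp [hl.1], ((h l hl.1).mp hl.2)⟩
  · refine ⟨by simp [hl.1], ?_⟩
    have := (h (l.map not) (by simp [hl.1])).mpr
    rw [map_not_not] at this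
    exact this hl.2
  · exact map_not_not l
  · exact map_not_not l

/-- the count of nonneg paths (never hitting `-1`) of length `2n` is `C(2n,n)` -/
lemma nohit_card (n : ℕ) :
    ((L (2*n)).filter (fun l => l.length < hm1 0 l)).card = (2*n).choose n := by
  classical
  -- split {psum ≥ 0} into nohit and hit parts
  have key := Finset.card_filter_add_card_filter_not
    (s := (L (2*n)).filter (fun l => 0 ≤ psum l)) (p := fun l => l.length < hm1 0 l)
  rw [Finset.filter_filter, Finset.filter_filter] at key
  -- nohit implies psum ≥ 0
  have e1 : (L (2*n)).filter (fun l => 0 ≤ psum l ∧ l.length < hm1 0 l)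
      = (L (2*n)).filter (fun l => l.length < hm1 0 l) := by
    apply Finset.filter_congr
    intro l _
    constructor
    · exact fun h => h.2
    · intro h
      exact ⟨by simpa using (cnt_eq_length_of_no_hit 0 l le_rfl h).2, h⟩
  -- hit ∧ psum ≥ 0 ↔ (via refl) psum ≤ -2
  have e2 : ((L (2*n)).filter (fun l => 0 ≤ psum l ∧ ¬ l.length < hm1 0 l)).card
      = ((L (2*n)).filter (fun l => psum l ≤ -2)).card := by
    refine Finset.card_bij' (fun l _ => refl 0 l) (fun l _ => refl 0 l) ?_ ?_ ?_ ?_ <;>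
      intro l hl <;> simp only [Finset.mem_filter, mem_L] at hl ⊢
    · obtain ⟨h1, h2, h3⟩ := hl
      have := psum_refl 0 l (by omega)
      exact ⟨by simp [h1], by omega⟩
    · obtain ⟨h1, h2⟩ := hl
      have hh : hm1 0 l ≤ l.length := hm1_le_of_low 0 l le_rfl (by omega)
      have := psum_refl 0 l hh
      refine ⟨by simp [h1], by omega, ?_⟩
      rw [length_refl, hm1_refl]
      omega
    · exact refl_refl 0 l (by omega)
    · exact refl_refl 0 l (hm1_le_of_low 0 l le_rfl (by omega))
  -- psum ≤ -2 ↔ psum ≥ 2 by flipping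
  have e3 : ((L (2*n)).filter (fun l => psum l ≤ -2)).card
      = ((L (2*n)).filter (fun l => 2 ≤ psum l)).card := by
    apply card_flip
    intro l _
    rw [psum_map_not]
    omega
  -- {psum ≥ 0} minus {psum ≥ 2} is {psum = 0}
  have key2 := Finset.card_filter_add_card_filter_not
    (s := (L (2*n)).filter (fun l => 0 ≤ psum l)) (p := fun l => 2 ≤ psum l)
  rw [Finset.filter_filter, Finset.filter_filter] at key2
  have e4 : (L (2*n)).filter (fun l => 0 ≤ psum l ∧ 2 ≤ psum l)
      = (L (2*n)).filter (fun l => 2 ≤ psum l) := by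
    apply Finset.filter_congr
    intro l _
    constructor
    · exact fun h => h.2
    · exact fun h => ⟨by omega, h⟩
  have e5 : (L (2*n)).filter (fun l => 0 ≤ psum l ∧ ¬ 2 ≤ psum l)
      = (L (2*n)).filter (fun l => l.count true = n) := by
    apply Finset.filter_congr
    intro l hl
    rw [mem_L] at hl
    have hpar := psum_count l
    rw [hl] at hpar
    constructor
    · intro h
      have : psum l = 0 ∨ psum l = 1 := by omega
      rcases this with h0 | h1
      · rw [h0] at hpar; push_cast at hpar; omega
      · rw [h1] at hpar; push_cast at hpar; omega
    · intro h
      rw [h] at hpar; push_cast at hpar; omega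
  rw [e1] at key
  rw [e4, e5, count_card] at key2
  omega

/-- the count of `cnt = length` paths of length `2n` is `C(2n,n)` -/
lemma cnt_full_card (n : ℕ) :
    ((L (2*n)).filter (fun l => cnt 0 l = 2*n)).card = (2*n).choose n := by
  classical
  rw [← nohit_card n]
  congr 1
  apply Finset.filter_congr
  intro l hl
  rw [mem_L] at hl
  constructor
  · intro h
    exact no_hit_of_cnt_eq_length 0 l le_rfl (by rw [h, hl])
  · intro h
    have := (cnt_eq_length_of_no_hit 0 l le_rfl h).1
    rw [this, hl]

/-! ### cnt values on excursions -/

lemma cnt_flip (l : List Bool) : ∀ s : ℤ, cnt s l + cnt (-s) (l.map not) = l.length := by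
  induction l with
  | nil => intro s; simp [cnt]
  | cons b l ih =>
    intro s
    have hstep : step (!b) = - step b := by cases b <;> simp [step]
    simp only [List.map_cons, cnt, List.length_cons, hstep]
    have := ih (s + step b)
    rw [show -s + -step b = -(s + step b) from by ring] at *
    have hb : (if 0 ≤ s ∧ 0 ≤ s + step b then (1:ℕ) else 0)
        + (if 0 ≤ -s ∧ 0 ≤ -(s + step b) then (1:ℕ) else 0) = 1 := by
      cases b <;> simp only [step_true, step_false] <;> grind
    omega

lemma frt_flip (l : List Bool) : ∀ s : ℤ, frt (-s) (l.map not) = frt s l := by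
  induction l with
  | nil => intro s; rfl
  | cons b l ih =>
    intro s
    have hstep : step (!b) = - step b := by cases b <;> simp [step]
    simp only [List.map_cons, frt, hstep,
      show -s + -step b = -(s + step b) from by ring]
    by_cases hs : s + step b = 0
    · rw [if_pos (by omega), if_pos hs]
    · rw [if_neg (by omega), if_neg hs, ih]

/-- positive start, first zero exactly at the end: all steps counted -/
lemma cnt_posE (l : List Bool) : ∀ s : ℤ, 0 < s → frt s l = l.length →
    cnt s l = l.length ∧ s + psum l = 0 := by
  induction l with
  | nil => intro s _ h; simp [frt] at h
  | cons b l ih =>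
    intro s hs h
    simp only [frt, List.length_cons] at h
    by_cases hb : s + step b = 0
    · rw [if_pos hb] at h
      have : l = [] := List.length_eq_zero_iff.mp (by omega)
      subst this
      simp only [cnt, psum_cons, psum_nil, List.length_cons, List.length_nil]
      rw [if_pos ⟨le_of_lt hs, by omega⟩]
      simp; omega
    · rw [if_neg hb] at h
      have hb2 : 0 < s + step b := by
        cases b <;> simp [step] at hb ⊢ <;> omega
      obtain ⟨h1, h2⟩ := ih (s + step b) hb2 (by omega)
      simp only [cnt, psum_cons, List.length_cons]
      rw [if_pos ⟨le_of_lt hs, le_of_lt hb2⟩, h1]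
      constructor
      · omega
      · omega
  
/-- positive start, never returns to zero: all steps counted -/
lemma cnt_posN (l : List Bool) : ∀ s : ℤ, 0 < s → l.length < frt s l →
    cnt s l = l.length ∧ 0 < s + psum l := by
  induction l with
  | nil => intro s hs _; simp [cnt]; omega
  | cons b l ih =>
    intro s hs h
    simp only [frt, List.length_cons] at h
    by_cases hb : s + step b = 0
    · rw [if_pos hb] at h; omega
    · rw [if_neg hb] at h
      have hb2 : 0 < s + step b := by
        cases b <;> simp [step] at hb ⊢ <;> omega
      obtain ⟨h1, h2⟩ := ih (s + step b) hb2 (by omega)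
      simp only [cnt, psum_cons, List.length_cons]
      rw [if_pos ⟨le_of_lt hs, le_of_lt hb2⟩, h1]
      constructor
      · omega
      · omega

/-- negative start, first zero exactly at end: no steps counted -/
lemma cnt_negE (l : List Bool) (s : ℤ) (hs : s < 0) (h : frt s l = l.length) :
    cnt s l = 0 ∧ s + psum l = 0 := by
  have hf : frt (-s) (l.map not) = l.length := by rw [frt_flip]; exact h
  obtain ⟨h1, h2⟩ := cnt_posE (l.map not) (-s) (by omega) (by rw [hf]; simp)
  have := cnt_flip l s
  rw [psum_map_not] at h2
  constructor
  · simp only [List.length_map] at h1; omega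
  · omega

/-- negative start, never returns to zero: no steps counted -/
lemma cnt_negN (l : List Bool) (s : ℤ) (hs : s < 0) (h : l.length < frt s l) :
    cnt s l = 0 ∧ s + psum l < 0 := by
  have hf : l.length < frt (-s) (l.map not) := by rw [frt_flip]; simpa using h
  obtain ⟨h1, h2⟩ := cnt_posN (l.map not) (-s) (by omega) (by simpa using hf)
  have := cnt_flip l s
  rw [psum_map_not] at h2
  constructor
  · simp only [List.length_map] at h1; omega
  · omega

/-- cnt of a path of even length from an even start is even -/
lemma cnt_even : ∀ (n : ℕ) (l : List Bool) (s : ℤ), l.length = 2*n → Even s →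
    Even (cnt s l) := by
  intro n
  induction n with
  | zero =>
    intro l s hl _
    have h0 : l = [] := List.length_eq_zero_iff.mp (by omega)
    subst h0; simp [cnt]
  | succ n ih =>
    intro l s hl hs
    match l with
    | b :: c :: l =>
      simp only [List.length_cons] at hl
      simp only [cnt]
      obtain ⟨t, rfl⟩ := hs
      have h12 : (if 0 ≤ t + t ∧ 0 ≤ t + t + step b then (1:ℕ) else 0)
          = (if 0 ≤ t + t + step b ∧ 0 ≤ t + t + step b + step c then (1:ℕ) else 0) := by
        cases b <;> cases c <;> simp only [step_true, step_false] <;> grind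
      have hsc : Even (step b + step c) := by cases b <;> cases c <;> decide
      have he : Even (t + t + step b + step c) := by
        rw [show t + t + step b + step c = (t+t) + (step b + step c) from by ring]
        exact (Even.add_self t).add hsc
      have := ih l (t + t + step b + step c) (by omega) he
      rw [← h12]
      obtain ⟨u, hu⟩ := this
      split_ifs
      · exact ⟨u + 1, by omega⟩
      · exact ⟨u, by omega⟩

/-! ### decomposition machinery -/

def U (j : ℕ) : ℕ := (2*j).choose j

/-- number of positive excursions of length `2r` -/
def Ep (r : ℕ) : ℕ := ((L (2*r)).filter (fun e => frt 0 e = 2*r ∧ e.headI = true)).card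

lemma headI_take (l : List Bool) (m : ℕ) (hm : 1 ≤ m) : (l.take m).headI = l.headI := by
  cases l with
  | nil => simp
  | cons b l =>
    obtain ⟨m', rfl⟩ := Nat.exists_eq_succ_of_ne_zero (by omega : m ≠ 0)
    simp

lemma partition_frt (n : ℕ) (p : List Bool → Prop) [DecidablePred p] :
    ((L n).filter p).card
      = ∑ v ∈ Finset.range (n+2), ((L n).filter (fun l => p l ∧ frt 0 l = v)).card := by
  classical
  rw [Finset.card_eq_sum_card_fiberwise
    (f := fun l => frt 0 l) (s := (L n).filter p) (t := Finset.range (n+2))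
    (fun l hl => by
      simp only [Finset.mem_coe, Finset.mem_filter, mem_L] at hl
      have := frt_le 0 l
      simp only [Finset.mem_coe, Finset.mem_range]
      omega)]
  congr 1
  funext v
  rw [Finset.filter_filter]

lemma frt_odd_card (n v : ℕ) (hv : ¬ 2 ∣ v) (hvn : v ≤ n) (p : List Bool → Prop)
    [DecidablePred p] :
    ((L n).filter (fun l => p l ∧ frt 0 l = v)).card = 0 := by
  rw [Finset.card_eq_zero, Finset.filter_eq_empty_iff]
  rintro l hl ⟨_, hf⟩
  rw [mem_L] at hl
  have h1 : frt 0 l ≤ l.length := by omega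
  have h2 := frt_sum_eq_zero 0 l h1
  rw [hf] at h2
  have h3 : (l.take v).length = v := by rw [List.length_take]; omega
  have h4 := psum_count (l.take v)
  rw [h3] at h4
  apply hv
  refine ⟨(l.take v).count true, ?_⟩
  simp only [zero_add] at h2
  omega

lemma sum_range_pair (N : ℕ) (f : ℕ → ℕ) :
    ∑ v ∈ Finset.range (2*N), f v = ∑ r ∈ Finset.range N, (f (2*r) + f (2*r+1)) := by
  induction N with
  | zero => simp
  | succ N ih =>
    rw [show 2*(N+1) = (2*N + 1) + 1 from by ring, Finset.sum_range_succ,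
      Finset.sum_range_succ, ih, Finset.sum_range_succ]
    omega

/-- key splitting: fibers of the first-return decomposition -/
lemma fiber_card (n r : ℕ) (hr : 1 ≤ r) (hrn : r ≤ n) (b : Bool)
    (Z Q : List Bool → Prop) [DecidablePred Z] [DecidablePred Q]
    (hZQ : ∀ p q : List Bool, p.length = 2*r → q.length = 2*(n-r) →
      frt 0 p = 2*r → p.headI = b → (Z (p ++ q) ↔ Q q)) :
    ((L (2*n)).filter (fun l => Z l ∧ frt 0 l = 2*r ∧ l.headI = b)).card
      = ((L (2*r)).filter (fun e => frt 0 e = 2*r ∧ e.headI = b)).card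
        * ((L (2*(n-r))).filter Q).card := by
  classical
  rw [← split_card]
  have hn : 2*n = 2*r + 2*(n-r) := by omega
  have hL : L (2*n) = L (2*r + 2*(n-r)) := by rw [← hn]
  rw [← hL]
  congr 1
  apply Finset.filter_congr
  intro l hl
  rw [mem_L] at hl
  have hlen : (l.take (2*r)).length = 2*r := by rw [List.length_take]; omega
  have hdlen : (l.drop (2*r)).length = 2*(n-r) := by rw [List.length_drop]; omega
  have hsplit : l.take (2*r) ++ l.drop (2*r) = l := List.take_append_drop _ _
  constructor
  · rintro ⟨hZ, hf, hh⟩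
    have hf2 : frt 0 (l.take (2*r)) = 2*r := by
      have := frt_of_append_le 0 (l.take (2*r)) (l.drop (2*r))
        (by rw [hsplit, hf, hlen])
      rw [hsplit] at this
      rw [this, hf]
    have hh2 : (l.take (2*r)).headI = b := by rw [headI_take l _ (by omega)]; exact hh
    refine ⟨⟨hf2, hh2⟩, ?_⟩
    rw [← (hZQ _ _ hlen hdlen hf2 hh2), hsplit]
    exact hZ
  · rintro ⟨⟨hf2, hh2⟩, hQ⟩
    have hf : frt 0 l = 2*r := by
      have := frt_append_of_le 0 (l.take (2*r)) (l.drop (2*r)) (by rw [hf2, hlen])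
      rw [hsplit] at this
      rw [this, hf2]
    refine ⟨?_, hf, by rw [← headI_take l (2*r) (by omega)]; exact hh2⟩
    rw [← hsplit]
    exact (hZQ _ _ hlen hdlen hf2 hh2).mpr hQ

/-- excursion facts: if `frt 0 e = e.length` then `psum e = 0` and
`cnt 0 e` is `e.length` or `0` according to the sign of the first step. -/
lemma exc_psum (e : List Bool) (he : frt 0 e = e.length) : psum e = 0 := by
  rcases eq_or_ne e [] with rfl | hne
  · simp
  · have h1 : frt 0 e ≤ e.length := le_of_eq he
    have := frt_sum_eq_zero 0 e h1
    rw [he, List.take_length] at this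
    omega

lemma exc_cnt (e : List Bool) (he : frt 0 e = e.length) (hne : e ≠ []) :
    cnt 0 e = (if e.headI = true then e.length else 0) := by
  cases e with
  | nil => simp at hne
  | cons b l =>
    simp only [frt, List.length_cons] at he
    cases b
    · -- first step down: negative excursion
      simp only [step_false, List.headI] at he ⊢
      simp only [Bool.false_eq_true, ↓reduceIte]
      by_cases h0 : (0:ℤ) + -1 = 0
      · omega
      · simp only [h0, ↓reduceIte] at he
        have := cnt_negE l (0 + -1) (by omega) (by omega)
        simp only [cnt, step_false]
        simp only [show ¬ ((0:ℤ) ≤ 0 ∧ (0:ℤ) ≤ 0 + -1) by omega, ↓reduceIte]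
        omega
    · simp only [step_true, List.headI] at he ⊢
      simp only [↓reduceIte]
      by_cases h0 : (0:ℤ) + 1 = 0
      · omega
      · simp only [h0, ↓reduceIte] at he
        have := cnt_posE l (0 + 1) (by omega) (by omega)
        simp only [cnt, step_true, List.length_cons]
        simp only [show (0:ℤ) ≤ 0 ∧ (0:ℤ) ≤ 0 + 1 by omega, and_self, ↓reduceIte]
        omega

/-- no-return paths: `cnt` is everything or nothing according to first step -/
lemma noret_cnt (l : List Bool) (hne : l ≠ []) (h : l.length < frt 0 l) :
    cnt 0 l = (if l.headI = true then l.length else 0) := by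
  cases l with
  | nil => simp at hne
  | cons b rest =>
    simp only [frt, List.length_cons] at h
    cases b
    · simp only [step_false, List.headI] at h ⊢
      simp only [Bool.false_eq_true, ↓reduceIte]
      by_cases h0 : (0:ℤ) + -1 = 0
      · omega
      · simp only [h0, ↓reduceIte] at h
        have := cnt_negN rest (0 + -1) (by omega) (by omega)
        simp only [cnt, step_false]
        simp only [show ¬ ((0:ℤ) ≤ 0 ∧ (0:ℤ) ≤ 0 + -1) by omega, ↓reduceIte]
        omega
    · simp only [step_true, List.headI] at h ⊢
      simp only [↓reduceIte]
      by_cases h0 : (0:ℤ) + 1 = 0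
      · omega
      · simp only [h0, ↓reduceIte] at h
        have := cnt_posN rest (0 + 1) (by omega) (by omega)
        simp only [cnt, step_true, List.length_cons]
        simp only [show (0:ℤ) ≤ 0 ∧ (0:ℤ) ≤ 0 + 1 by omega, and_self, ↓reduceIte]
        omega

/-- flipping: negative excursions are as numerous as positive ones -/
lemma En_eq_Ep (r : ℕ) (hr : 1 ≤ r) :
    ((L (2*r)).filter (fun e => frt 0 e = 2*r ∧ e.headI = false)).card = Ep r := by
  rw [Ep]
  apply card_flip
  intro l hl
  have hne : l ≠ [] := by
    rintro rfl
    simp at hl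
    omega
  have h1 : frt 0 (l.map not) = frt 0 l := by
    have := frt_flip l 0
    rwa [neg_zero] at this
  rw [h1]
  have h2 : (l.map not).headI = !(l.headI) := by
    cases l with
    | nil => simp at hne
    | cons b rest => simp
  rw [h2]
  constructor
  · rintro ⟨hf, hh⟩; exact ⟨hf, by rw [hh]; rfl⟩
  · rintro ⟨hf, hh⟩
    refine ⟨hf, ?_⟩
    cases hx : l.headI
    · rfl
    · rw [hx] at hh; simp at hh

/-! ### the two recurrences -/

def Bc (n k : ℕ) : ℕ := ((L (2*n)).filter (fun l => cnt 0 l = 2*k)).card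

lemma Bc_zero (n k : ℕ) (h : n < k) : Bc n k = 0 := by
  rw [Bc, Finset.card_eq_zero, Finset.filter_eq_empty_iff]
  intro l hl hc
  rw [mem_L] at hl
  have := cnt_le_length 0 l
  omega

lemma bridge_card (j : ℕ) : ((L (2*j)).filter (fun l => psum l = 0)).card = U j := by
  rw [U, ← count_card (2*j) j]
  congr 1
  apply Finset.filter_congr
  intro l hl
  rw [mem_L] at hl
  have := psum_count l
  rw [hl] at this
  constructor
  · intro h; rw [h] at this; push_cast at this; omega
  · intro h; rw [h] at this; push_cast at this; omega

lemma partition_even (n : ℕ) (hn : 1 ≤ n) (p : List Bool → Prop) [DecidablePred p]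
    (hsent : ((L (2*n)).filter (fun l => p l ∧ frt 0 l = 2*n+1)).card = 0) :
    ((L (2*n)).filter p).card
      = ∑ i ∈ Finset.range n, ((L (2*n)).filter (fun l => p l ∧ frt 0 l = 2*(i+1))).card := by
  classical
  rw [partition_frt, show 2*n+2 = 2*(n+1) from by ring, sum_range_pair]
  have hstep : ∀ r ∈ Finset.range (n+1),
      (((L (2*n)).filter (fun l => p l ∧ frt 0 l = 2*r)).card
        + ((L (2*n)).filter (fun l => p l ∧ frt 0 l = 2*r+1)).card)
      = ((L (2*n)).filter (fun l => p l ∧ frt 0 l = 2*r)).card := by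
    intro r hr
    rw [Finset.mem_range] at hr
    rcases eq_or_ne r n with rfl | hrn
    · rw [hsent, add_zero]
    · rw [frt_odd_card (2*n) (2*r+1) (by omega) (by omega), add_zero]
  rw [Finset.sum_congr rfl hstep, Finset.sum_range_succ']
  have h0 : ((L (2*n)).filter (fun l => p l ∧ frt 0 l = 2*0)).card = 0 := by
    rw [Finset.card_eq_zero, Finset.filter_eq_empty_iff]
    rintro l _ ⟨_, hf⟩
    have := frt_pos 0 l
    omega
  rw [h0, add_zero]

lemma bridge_rec (j : ℕ) (hj : 1 ≤ j) :
    U j = ∑ i ∈ Finset.range j, 2 * (Ep (i+1) * U (j-(i+1))) := by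
  classical
  have hsent : ((L (2*j)).filter (fun l => psum l = 0 ∧ frt 0 l = 2*j+1)).card = 0 := by
    rw [Finset.card_eq_zero, Finset.filter_eq_empty_iff]
    rintro l hl ⟨hp, hf⟩
    rw [mem_L] at hl
    have hne : l ≠ [] := by rintro rfl; simp at hl; omega
    have := frt_le_of_sum_zero 0 l hne (by omega)
    omega
  rw [← bridge_card j, partition_even j hj _ hsent]
  apply Finset.sum_congr rfl
  intro i hi
  rw [Finset.mem_range] at hi
  set r := i + 1 with hr
  -- split the fiber by the head
  have hsplit := Finset.card_filter_add_card_filter_not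
    (s := (L (2*j)).filter (fun l => psum l = 0 ∧ frt 0 l = 2*r))
    (p := fun l => l.headI = true)
  rw [Finset.filter_filter, Finset.filter_filter] at hsplit
  have e1 : ∀ (b : Bool),
      ((L (2*j)).filter (fun l => (psum l = 0 ∧ frt 0 l = 2*r) ∧ l.headI = b)).card
      = ((L (2*r)).filter (fun e => frt 0 e = 2*r ∧ e.headI = b)).card * U (j - r) := by
    intro b
    have := fiber_card j r (by omega) (by omega) b
      (fun l => psum l = 0) (fun q => psum q = 0)
      (fun p q hp hq hf hh => by
        have hp0 : psum p = 0 := exc_psum p (by rw [hf, hp])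
        show psum (p ++ q) = 0 ↔ psum q = 0
        rw [psum_append, hp0, zero_add])
    rw [← bridge_card (j - r), ← this]
    congr 1
    apply Finset.filter_congr
    intro l _
    constructor
    · rintro ⟨⟨h1, h2⟩, h3⟩; exact ⟨h1, h2, h3⟩
    · rintro ⟨h1, h2, h3⟩; exact ⟨⟨h1, h2⟩, h3⟩
  have e3 : ((L (2*j)).filter (fun a => (psum a = 0 ∧ frt 0 a = 2*r) ∧ ¬ a.headI = true)).card
      = ((L (2*j)).filter (fun a => (psum a = 0 ∧ frt 0 a = 2*r) ∧ a.headI = false)).card := by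
    congr 1
    apply Finset.filter_congr
    intro l _
    simp [Bool.not_eq_true]
  rw [e3] at hsplit
  rw [← hsplit, e1 true, e1 false, En_eq_Ep r (by omega)]
  rw [Ep]
  ring

/-! ### the main count -/

theorem Bc_eq : ∀ n k : ℕ, k ≤ n → Bc n k = U k * U (n - k) := by
  intro n
  induction n using Nat.strong_induction_on with
  | _ n ih =>
  intro k hk
  rcases eq_or_ne k n with rfl | hkn
  · rw [Nat.sub_self]
    have h1 : Bc k k = U k := cnt_full_card k
    rw [h1, show U 0 = 1 from by simp [U], mul_one]
  rcases eq_or_ne k 0 with rfl | hk0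
  · rw [Nat.sub_zero]
    have h1 : Bc n 0 = ((L (2*n)).filter (fun l => cnt 0 l = 2*n)).card := by
      rw [Bc]
      apply card_flip
      intro l hl
      have hcf := cnt_flip l 0
      rw [neg_zero, hl] at hcf
      omega
    rw [h1, cnt_full_card, show U 0 = 1 from by simp [U], one_mul, U]
  -- middle case : 1 ≤ k ≤ n - 1
  have hk1 : 1 ≤ k := by omega
  have hkn1 : k < n := by omega
  have hn1 : 1 ≤ n := by omega
  have hnk1 : 1 ≤ n - k := by omega
  classical
  have hsent : ((L (2*n)).filter (fun l => cnt 0 l = 2*k ∧ frt 0 l = 2*n+1)).card = 0 := by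
    rw [Finset.card_eq_zero, Finset.filter_eq_empty_iff]
    rintro l hl ⟨hc, hf⟩
    rw [mem_L] at hl
    have hne : l ≠ [] := by rintro rfl; simp at hl; omega
    have hcn := noret_cnt l hne (by omega)
    rw [hl] at hcn
    split_ifs at hcn <;> omega
  have hpart := partition_even n hn1 (fun l => cnt 0 l = 2*k) hsent
  have hfib : ∀ i ∈ Finset.range n,
      ((L (2*n)).filter (fun l => cnt 0 l = 2*k ∧ frt 0 l = 2*(i+1))).card
      = Ep (i+1) * ((if i+1 ≤ k then Bc (n-(i+1)) (k-(i+1)) else 0) + Bc (n-(i+1)) k) := by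
    intro i hi
    rw [Finset.mem_range] at hi
    have hsplit := Finset.card_filter_add_card_filter_not
      (s := (L (2*n)).filter (fun l => cnt 0 l = 2*k ∧ frt 0 l = 2*(i+1)))
      (p := fun l => l.headI = true)
    rw [Finset.filter_filter, Finset.filter_filter] at hsplit
    have e3 : ((L (2*n)).filter
          (fun a => (cnt 0 a = 2*k ∧ frt 0 a = 2*(i+1)) ∧ ¬ a.headI = true)).card
        = ((L (2*n)).filter
          (fun a => (cnt 0 a = 2*k ∧ frt 0 a = 2*(i+1)) ∧ a.headI = false)).card := by
      congr 1
      apply Finset.filter_congr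
      intro l _
      simp [Bool.not_eq_true]
    rw [e3] at hsplit
    -- head true fiber
    have hexc : ∀ (p : List Bool) (b : Bool), p.length = 2*(i+1) → frt 0 p = 2*(i+1) →
        p.headI = b → cnt 0 p = (if b = true then 2*(i+1) else 0) ∧ psum p = 0 := by
      intro p b hp hf hh
      have hne : p ≠ [] := by rintro rfl; simp at hp
      have h1 := exc_cnt p (by rw [hf, hp]) hne
      have h2 := exc_psum p (by rw [hf, hp])
      rw [hh, hp] at h1
      exact ⟨h1, h2⟩
    have et : ((L (2*n)).filter
          (fun l => (cnt 0 l = 2*k ∧ frt 0 l = 2*(i+1)) ∧ l.headI = true)).card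
        = Ep (i+1) * (if i+1 ≤ k then Bc (n-(i+1)) (k-(i+1)) else 0) := by
      have hfc := fiber_card n (i+1) (by omega) (by omega) true
        (fun l => cnt 0 l = 2*k) (fun q => 2*(i+1) + cnt 0 q = 2*k)
        (fun p q hp hq hf hh => by
          show cnt 0 (p ++ q) = 2*k ↔ 2*(i+1) + cnt 0 q = 2*k
          obtain ⟨h1, h2⟩ := hexc p true hp hf hh
          rw [if_pos rfl] at h1
          rw [cnt_append, h1, h2, add_zero])
      have e4 : ((L (2*n)).filter
            (fun l => (cnt 0 l = 2*k ∧ frt 0 l = 2*(i+1)) ∧ l.headI = true)).card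
          = ((L (2*n)).filter
            (fun l => cnt 0 l = 2*k ∧ frt 0 l = 2*(i+1) ∧ l.headI = true)).card := by
        congr 1
        apply Finset.filter_congr
        intro l _
        tauto
      rw [e4, hfc]
      congr 1
      by_cases hrk : i+1 ≤ k
      · rw [if_pos hrk, Bc]
        congr 1
        apply Finset.filter_congr
        intro l _
        omega
      · rw [if_neg hrk, Finset.card_eq_zero, Finset.filter_eq_empty_iff]
        intro l _ hc
        omega
    -- head false fiber
    have ef : ((L (2*n)).filter
          (fun l => (cnt 0 l = 2*k ∧ frt 0 l = 2*(i+1)) ∧ l.headI = false)).card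
        = Ep (i+1) * Bc (n-(i+1)) k := by
      have hfc := fiber_card n (i+1) (by omega) (by omega) false
        (fun l => cnt 0 l = 2*k) (fun q => cnt 0 q = 2*k)
        (fun p q hp hq hf hh => by
          show cnt 0 (p ++ q) = 2*k ↔ cnt 0 q = 2*k
          obtain ⟨h1, h2⟩ := hexc p false hp hf hh
          rw [if_neg (by simp)] at h1
          rw [cnt_append, h1, h2, add_zero, zero_add])
      have e4 : ((L (2*n)).filter
            (fun l => (cnt 0 l = 2*k ∧ frt 0 l = 2*(i+1)) ∧ l.headI = false)).card
          = ((L (2*n)).filter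
            (fun l => cnt 0 l = 2*k ∧ frt 0 l = 2*(i+1) ∧ l.headI = false)).card := by
        congr 1
        apply Finset.filter_congr
        intro l _
        tauto
      rw [e4, hfc, En_eq_Ep (i+1) (by omega)]
      rfl
    rw [← hsplit, et, ef]
    ring
  rw [Finset.sum_congr rfl hfib] at hpart
  -- now use the induction hypothesis
  have hih : ∀ i ∈ Finset.range n,
      Ep (i+1) * ((if i+1 ≤ k then Bc (n-(i+1)) (k-(i+1)) else 0) + Bc (n-(i+1)) k)
      = Ep (i+1) * ((if i+1 ≤ k then U (k-(i+1)) * U (n-k) else 0)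
          + (if i+1 ≤ n-k then U k * U (n-k-(i+1)) else 0)) := by
    intro i hi
    rw [Finset.mem_range] at hi
    congr 1
    have hA : (if i+1 ≤ k then Bc (n-(i+1)) (k-(i+1)) else 0)
        = (if i+1 ≤ k then U (k-(i+1)) * U (n-k) else 0) := by
      by_cases hrk : i+1 ≤ k
      · rw [if_pos hrk, if_pos hrk, ih (n-(i+1)) (by omega) (k-(i+1)) (by omega),
          show n-(i+1) - (k-(i+1)) = n-k from by omega]
      · rw [if_neg hrk, if_neg hrk]
    have hB : Bc (n-(i+1)) k = (if i+1 ≤ n-k then U k * U (n-k-(i+1)) else 0) := by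
      by_cases hrk : i+1 ≤ n-k
      · rw [if_pos hrk, ih (n-(i+1)) (by omega) k (by omega),
          show n-(i+1) - k = n-k-(i+1) from by omega]
      · rw [if_neg hrk, Bc_zero _ _ (by omega)]
    rw [hA, hB]
  rw [Finset.sum_congr rfl hih] at hpart
  -- split the sum into the two halves and apply the bridge identities
  have hkey : 2 * Bc n k = 2 * (U k * U (n-k)) := by
    have hsum : Bc n k
        = (∑ i ∈ Finset.range n, Ep (i+1) * (if i+1 ≤ k then U (k-(i+1)) * U (n-k) else 0))
          + (∑ i ∈ Finset.range n, Ep (i+1) * (if i+1 ≤ n-k then U k * U (n-k-(i+1)) else 0)) := by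
      rw [Bc, hpart, ← Finset.sum_add_distrib]
      apply Finset.sum_congr rfl
      intro i _
      ring
    have hS1 : ∑ i ∈ Finset.range n, Ep (i+1) * (if i+1 ≤ k then U (k-(i+1)) * U (n-k) else 0)
        = ∑ i ∈ Finset.range k, Ep (i+1) * (U (k-(i+1)) * U (n-k)) := by
      rw [← Finset.sum_subset (Finset.range_subset_range.mpr (le_of_lt hkn1))
        (fun x _ hx => by
          rw [Finset.mem_range, not_lt] at hx
          rw [if_neg (by omega), mul_zero])]
      apply Finset.sum_congr rfl
      intro i hi
      rw [Finset.mem_range] at hi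
      rw [if_pos (by omega)]
    have hS2 : ∑ i ∈ Finset.range n, Ep (i+1) * (if i+1 ≤ n-k then U k * U (n-k-(i+1)) else 0)
        = ∑ i ∈ Finset.range (n-k), Ep (i+1) * (U k * U (n-k-(i+1))) := by
      rw [← Finset.sum_subset (Finset.range_subset_range.mpr (by omega : n-k ≤ n))
        (fun x _ hx => by
          rw [Finset.mem_range, not_lt] at hx
          rw [if_neg (by omega), mul_zero])]
      apply Finset.sum_congr rfl
      intro i hi
      rw [Finset.mem_range] at hi
      rw [if_pos (by omega)]
    rw [hsum, hS1, hS2, Nat.mul_add]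
    have h1 : 2 * ∑ i ∈ Finset.range k, Ep (i+1) * (U (k-(i+1)) * U (n-k))
        = U k * U (n-k) := by
      calc 2 * ∑ i ∈ Finset.range k, Ep (i+1) * (U (k-(i+1)) * U (n-k))
          = ∑ i ∈ Finset.range k, (2 * (Ep (i+1) * U (k-(i+1)))) * U (n-k) := by
            rw [Finset.mul_sum]
            apply Finset.sum_congr rfl
            intro i _
            ring
        _ = (∑ i ∈ Finset.range k, 2 * (Ep (i+1) * U (k-(i+1)))) * U (n-k) := by
            rw [Finset.sum_mul]
        _ = U k * U (n-k) := by rw [← bridge_rec k hk1]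
    have h2 : 2 * ∑ i ∈ Finset.range (n-k), Ep (i+1) * (U k * U (n-k-(i+1)))
        = U k * U (n-k) := by
      calc 2 * ∑ i ∈ Finset.range (n-k), Ep (i+1) * (U k * U (n-k-(i+1)))
          = ∑ i ∈ Finset.range (n-k), U k * (2 * (Ep (i+1) * U (n-k-(i+1)))) := by
            rw [Finset.mul_sum]
            apply Finset.sum_congr rfl
            intro i _
            ring
        _ = U k * (∑ i ∈ Finset.range (n-k), 2 * (Ep (i+1) * U (n-k-(i+1)))) := by
            rw [Finset.mul_sum]
        _ = U k * U (n-k) := by rw [← bridge_rec (n-k) hnk1]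
    rw [h1, h2]
    ring
  omega

/-! ### half-count and sum formula for cnt -/

lemma Bhalf (m k : ℕ) (hk : k ≤ m) :
    ((L (2*m)).filter (fun l => cnt 0 l / 2 = k)).card
      = (2*k).choose k * (2*(m-k)).choose (m-k) := by
  classical
  have h : ((L (2*m)).filter (fun l => cnt 0 l / 2 = k))
      = ((L (2*m)).filter (fun l => cnt 0 l = 2*k)) := by
    apply Finset.filter_congr
    intro l hl
    rw [mem_L] at hl
    have hev := cnt_even m l 0 hl (Even.zero)
    obtain ⟨t, ht⟩ := hev
    constructor
    · intro h2; omega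
    · intro h2; omega
  rw [h]
  have := Bc_eq m k hk
  rw [Bc] at this
  rw [this, U, U]

lemma cnt_eq_sum (l : List Bool) : ∀ s : ℤ, cnt s l
    = ∑ j ∈ Finset.range l.length,
        (if 0 ≤ s + psum (l.take j) ∧ 0 ≤ s + psum (l.take (j+1)) then 1 else 0) := by
  induction l with
  | nil => intro s; simp [cnt]
  | cons b l ih =>
    intro s
    rw [show (b :: l).length = l.length + 1 from rfl, Finset.sum_range_succ']
    have h0 : (if 0 ≤ s + psum ((b::l).take 0) ∧ 0 ≤ s + psum ((b::l).take 1) then (1:ℕ) else 0)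
        = (if 0 ≤ s ∧ 0 ≤ s + step b then 1 else 0) := by
      simp only [List.take_zero, psum_nil, add_zero, List.take_succ_cons, List.take_zero,
        psum_cons, psum_nil]
    rw [h0]
    have h1 : ∀ j ∈ Finset.range l.length,
        (if 0 ≤ s + psum ((b::l).take (j+1)) ∧ 0 ≤ s + psum ((b::l).take (j+1+1)) then (1:ℕ) else 0)
        = (if 0 ≤ (s + step b) + psum (l.take j) ∧ 0 ≤ (s + step b) + psum (l.take (j+1))
            then 1 else 0) := by
      intro j _
      simp only [List.take_succ_cons, psum_cons, ← add_assoc]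
    rw [Finset.sum_congr rfl h1, cnt, ← ih (s + step b)]
    omega

end CF
open MeasureTheory ProbabilityTheory

/-- Chung–Feller: with `R m = (1/2) T m`,
`P(R m = k) = 2^{-2m} C(2k,k) C(2m-2k, m-k)` for `0 ≤ k ≤ m`. -/
theorem stmt4 {Ω : Type*} [MeasurableSpace Ω] (μ : Measure Ω) [IsProbabilityMeasure μ]
    (ε : ℕ → Ω → ℤ) (hmeas : ∀ j, Measurable (ε j))
    (hindep : iIndepFun ε μ)
    (hval : ∀ j ω, ε j ω = 1 ∨ ε j ω = -1)
    (hp : ∀ j, μ {ω | ε j ω = 1} = 1 / 2)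
    (S : ℕ → Ω → ℤ) (hS : ∀ k ω, S k ω = ∑ i ∈ Finset.range k, ε (i + 1) ω)
    (X : ℕ → Ω → ℕ)
    (hX : ∀ j ω, X j ω = if 0 ≤ S (j - 1) ω ∧ 0 ≤ S j ω then 1 else 0)
    (T : ℕ → Ω → ℕ) (hT : ∀ m ω, T m ω = ∑ j ∈ Finset.range (2 * m), X (j + 1) ω)
    (R : ℕ → Ω → ℕ) (hR : ∀ m ω, R m ω = T m ω / 2)
    (m : ℕ) (hm : 1 ≤ m) (k : ℕ) (hk : k ≤ m) :
    μ {ω | R m ω = k} =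
      ((Nat.choose (2 * k) k * Nat.choose (2 * (m - k)) (m - k) : ℕ) : ENNReal) / 2 ^ (2 * m) := by
  classical
  set bl : Ω → List Bool := fun ω => (List.range (2*m)).map (fun i => decide (ε (i+1) ω = 1))
    with hbl
  have hsd : ∀ i ω, CF.step (decide (ε (i+1) ω = 1)) = ε (i+1) ω := by
    intro i ω
    rcases hval (i+1) ω with h | h
    · rw [h]; simp
    · rw [h]; norm_num
  have hlen : ∀ ω, (bl ω).length = 2*m := by intro ω; simp [hbl]
  have hgetE : ∀ ω i (h : i < 2*m), (bl ω)[i]? = some (decide (ε (i+1) ω = 1)) := by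
    intro ω i h
    simp [hbl, List.getElem?_map, List.getElem?_range h]
  have hget : ∀ ω i, i < 2*m → (bl ω).getD i true = decide (ε (i+1) ω = 1) := by
    intro ω i h
    rw [List.getD_eq_getElem?_getD, hgetE ω i h]
    rfl
  have hpsum : ∀ ω j, j ≤ 2*m → CF.psum ((bl ω).take j) = S j ω := by
    intro ω j
    induction j with
    | zero => intro _; simp [hS]
    | succ j ihj =>
      intro hj
      have h1 : S (j+1) ω = S j ω + ε (j+1) ω := by
        rw [hS, hS, Finset.sum_range_succ]
      rw [h1, ← ihj (by omega), List.take_succ, CF.psum_append, hgetE ω j (by omega)]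
      congr 1
      show CF.psum [decide (ε (j+1) ω = 1)] = ε (j+1) ω
      show CF.step (decide (ε (j+1) ω = 1)) + 0 = ε (j+1) ω
      rw [add_zero, hsd]
  have hcnt : ∀ ω, T m ω = CF.cnt 0 (bl ω) := by
    intro ω
    rw [hT, CF.cnt_eq_sum, hlen]
    apply Finset.sum_congr rfl
    intro j hj
    rw [Finset.mem_range] at hj
    rw [hX]
    have e1 : (j + 1) - 1 = j := by omega
    rw [e1, ← hpsum ω j (by omega), ← hpsum ω (j+1) (by omega), zero_add, zero_add]
  set good : Finset (List Bool) := (CF.L (2*m)).filter (fun l => CF.cnt 0 l / 2 = k)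
    with hgood
  have hunion : {ω | R m ω = k} = ⋃ l ∈ good, {ω | bl ω = l} := by
    ext ω
    simp only [Set.mem_setOf_eq, Set.mem_iUnion, exists_prop]
    constructor
    · intro h
      refine ⟨bl ω, ?_, rfl⟩
      rw [hgood, Finset.mem_filter, CF.mem_L]
      exact ⟨hlen ω, by rw [← hcnt]; rw [hR, hcnt] at h; rw [hcnt]; exact h⟩
    · rintro ⟨l, hl, hblω⟩
      rw [hgood, Finset.mem_filter] at hl
      rw [hR, hcnt, hblω]
      exact hl.2
  have hevent : ∀ l, l.length = 2*m → {ω | bl ω = l}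
      = ⋂ i ∈ Finset.range (2*m), ε (i+1) ⁻¹' {CF.step (l.getD i true)} := by
    intro l hl
    ext ω
    simp only [Set.mem_setOf_eq, Set.mem_iInter, Set.mem_preimage, Set.mem_singleton_iff,
      Finset.mem_range]
    constructor
    · rintro rfl i hi
      rw [hget ω i hi, hsd]
    · intro h
      apply List.ext_getElem (by rw [hlen, hl])
      intro i h1 h2
      rw [hlen] at h1
      have hli : l[i] = l.getD i true := (List.getD_eq_getElem l true (by omega)).symm
      have hbli : (bl ω)[i] = decide (ε (i+1) ω = 1) := by
        have := hgetE ω i h1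
        rw [List.getElem?_eq_getElem (by rw [hlen]; omega)] at this
        exact Option.some_injective _ this
      rw [hbli, hli]
      have := h i h1
      cases hd : l.getD i true
      · rw [hd] at this
        simp only [CF.step_false] at this
        rw [this]
        norm_num
      · rw [hd] at this
        simp only [CF.step_true] at this
        rw [this]
        simp
  have hhalf : ∀ j (b : Bool), μ (ε j ⁻¹' {CF.step b}) = 2⁻¹ := by
    intro j b
    have h1 : μ (ε j ⁻¹' {1}) = 2⁻¹ := by
      have : ε j ⁻¹' {1} = {ω | ε j ω = 1} := by ext ω; simp
      rw [this, hp j, one_div]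
    cases b
    · have hc : ε j ⁻¹' {CF.step false} = (ε j ⁻¹' {1})ᶜ := by
        ext ω
        simp only [CF.step_false, Set.mem_preimage, Set.mem_singleton_iff, Set.mem_compl_iff]
        constructor
        · intro h h2; rw [h2] at h; norm_num at h
        · intro h; rcases hval j ω with h2 | h2
          · exact absurd h2 h
          · exact h2
      rw [hc, measure_compl (hmeas j (measurableSet_singleton 1)) (measure_ne_top μ _),
        measure_univ, h1]
      exact ENNReal.one_sub_inv_two
    · simpa using h1
  have hprob : ∀ l, l.length = 2*m → μ {ω | bl ω = l} = ((2:ENNReal) ^ (2*m))⁻¹ := by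
    intro l hl
    rw [hevent l hl]
    have hre : ⋂ i ∈ Finset.range (2*m), ε (i+1) ⁻¹' {CF.step (l.getD i true)}
        = ⋂ i ∈ (Finset.range (2*m)).image (· + 1), ε i ⁻¹' {CF.step (l.getD (i-1) true)} := by
      rw [Finset.set_biInter_finset_image]
      apply Set.iInter₂_congr
      intro i hi
      have : i + 1 - 1 = i := by omega
      rw [this]
    rw [hre]
    rw [(ProbabilityTheory.iIndepFun_iff_measure_inter_preimage_eq_mul.mp hindep)
      ((Finset.range (2*m)).image (· + 1))
      (fun i _ => measurableSet_singleton _)]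
    rw [Finset.prod_image (fun x _ y _ h => by omega)]
    have : ∀ i ∈ Finset.range (2*m),
        μ (ε (i+1) ⁻¹' {CF.step (l.getD (i+1-1) true)}) = 2⁻¹ := fun i _ => hhalf _ _
    rw [Finset.prod_congr rfl this, Finset.prod_const, Finset.card_range, ← ENNReal.inv_pow]
  have hmeasE : ∀ l ∈ good, MeasurableSet {ω | bl ω = l} := by
    intro l hl
    rw [hgood, Finset.mem_filter, CF.mem_L] at hl
    rw [hevent l hl.1]
    exact Finset.measurableSet_biInter _
      (fun i _ => hmeas (i+1) (measurableSet_singleton _))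
  have hdisj : (good : Set (List Bool)).PairwiseDisjoint (fun l => {ω | bl ω = l}) := by
    intro l1 h1 l2 h2 hne
    simp only [Function.onFun, Set.disjoint_left, Set.mem_setOf_eq]
    rintro ω rfl h
    exact hne h
  rw [hunion, measure_biUnion_finset hdisj hmeasE]
  have hsum : ∀ l ∈ good, μ {ω | bl ω = l} = ((2:ENNReal) ^ (2*m))⁻¹ := by
    intro l hl
    rw [hgood, Finset.mem_filter, CF.mem_L] at hl
    exact hprob l hl.1
  rw [Finset.sum_congr rfl hsum, Finset.sum_const]
  have hcard : good.card = (2*k).choose k * (2*(m-k)).choose (m-k) := CF.Bhalf m k hk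
  rw [hcard, nsmul_eq_mul, div_eq_mul_inv]
end

section
/- (Discrete density-approach Stein characterization) Let p be a probability mass function on the integers that is strictly positive exactly on the finite integer interval I = [a, b] ∩ ℤ, and let ψ(k) = (p(k+1) - p(k))/p(k) for k ∈ I. A random variable X with values in I has probability mass function p if and only if for every function f : ℤ → ℝ with f(a-1) = 0 one has E[ f(X) - f(X-1) + ψ(X) f(X) ] = 0. -/
open MeasureTheory

private lemma icc_telescope (a b : ℤ) (hab : a ≤ b) (F : ℤ → ℝ) :
    ∑ k ∈ Finset.Icc a b, (F (k + 1) - F k) = F (b + 1) - F a := by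
  refine Int.le_induction (motive := fun n _ => ∑ k ∈ Finset.Icc a n, (F (k + 1) - F k) = F (n + 1) - F a) ?_ ?_ b hab
  · simp
  · intro b hb ih
    have hins : Finset.Icc a (b + 1) = insert (b + 1) (Finset.Icc a b) := by
      ext k; simp only [Finset.mem_Icc, Finset.mem_insert]; omega
    rw [hins, Finset.sum_insert (by simp only [Finset.mem_Icc]; omega), ih]
    ring

private lemma integral_eq_sum {Ω : Type*} [MeasurableSpace Ω] (μ : Measure Ω)
    [IsProbabilityMeasure μ] (a b : ℤ) (X : Ω → ℤ) (hXmeas : Measurable X)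
    (hXI : ∀ ω, a ≤ X ω ∧ X ω ≤ b) (g : ℤ → ℝ) :
    ∫ ω, g (X ω) ∂μ = ∑ k ∈ Finset.Icc a b, (μ {ω | X ω = k}).toReal * g k := by
  have hmeas : ∀ k : ℤ, MeasurableSet {ω | X ω = k} := fun k =>
    hXmeas (measurableSet_singleton k)
  have hfun : ∀ ω, g (X ω) = ∑ k ∈ Finset.Icc a b,
      Set.indicator {ω' | X ω' = k} (fun _ => g k) ω := by
    intro ω
    rw [Finset.sum_eq_single (X ω)]
    · simp [Set.indicator]
    · intro k _ hk
      exact Set.indicator_of_notMem (fun h => hk (h.symm)) _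
    · intro h; exact absurd (Finset.mem_Icc.mpr ⟨(hXI ω).1, (hXI ω).2⟩) h
  simp_rw [hfun]
  rw [integral_finset_sum]
  · refine Finset.sum_congr rfl fun k _ => ?_
    rw [integral_indicator_const _ (hmeas k)]
    simp [mul_comm, measureReal_def]
  · intro k _
    exact (integrable_const (g k)).indicator (hmeas k)

private lemma sum_meas_eq_one {Ω : Type*} [MeasurableSpace Ω] (μ : Measure Ω)
    [IsProbabilityMeasure μ] (a b : ℤ) (X : Ω → ℤ) (hXmeas : Measurable X)
    (hXI : ∀ ω, a ≤ X ω ∧ X ω ≤ b) :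
    ∑ k ∈ Finset.Icc a b, μ {ω | X ω = k} = 1 := by
  have hmeas : ∀ k : ℤ, MeasurableSet {ω | X ω = k} := fun k =>
    hXmeas (measurableSet_singleton k)
  have huniv : (⋃ k ∈ Finset.Icc a b, {ω | X ω = k}) = Set.univ := by
    ext ω
    simp only [Set.mem_iUnion, Finset.mem_Icc, Set.mem_setOf_eq, Set.mem_univ, iff_true]
    exact ⟨X ω, ⟨(hXI ω).1, (hXI ω).2⟩, rfl⟩
  have hdisj : (↑(Finset.Icc a b) : Set ℤ).PairwiseDisjoint fun k => {ω | X ω = k} := by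
    intro i _ j _ hij
    refine Set.disjoint_left.mpr fun ω hi hj => hij ?_
    simp only [Set.mem_setOf_eq] at hi hj
    rw [← hi, ← hj]
  rw [← measure_univ (μ := μ), ← huniv, measure_biUnion_finset hdisj fun k _ => hmeas k]

/-- discrete density-approach Stein characterization:
a random variable `X` with values in `I = [a,b] ∩ ℤ` has pmf `p`
(strictly positive exactly on `I`) iff
`E[f(X) - f(X-1) + ψ(X) f(X)] = 0` for all `f : ℤ → ℝ` with `f(a-1) = 0`,
where `ψ k = (p(k+1) - p k)/p k`. -/
theorem stmt8 {Ω : Type*} [MeasurableSpace Ω] (μ : Measure Ω) [IsProbabilityMeasure μ]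
    (a b : ℤ) (hab : a ≤ b) (p : ℤ → ℝ)
    (hpos : ∀ k, a ≤ k → k ≤ b → 0 < p k)
    (hzero : ∀ k, ¬(a ≤ k ∧ k ≤ b) → p k = 0)
    (hsum : ∑ k ∈ Finset.Icc a b, p k = 1)
    (ψ : ℤ → ℝ) (hψ : ∀ k, ψ k = (p (k + 1) - p k) / p k)
    (X : Ω → ℤ) (hXmeas : Measurable X)
    (hXI : ∀ ω, a ≤ X ω ∧ X ω ≤ b) :
    (∀ k : ℤ, μ {ω | X ω = k} = ENNReal.ofReal (p k)) ↔
      (∀ f : ℤ → ℝ, f (a - 1) = 0 →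
        ∫ ω, (f (X ω) - f (X ω - 1) + ψ (X ω) * f (X ω)) ∂μ = 0) := by
  have hne : ∀ k : ℤ, μ {ω | X ω = k} ≠ ⊤ := fun k => (measure_lt_top μ _).ne
  set q : ℤ → ℝ := fun k => (μ {ω | X ω = k}).toReal with hq
  have hint : ∀ g : ℤ → ℝ, ∫ ω, g (X ω) ∂μ = ∑ k ∈ Finset.Icc a b, q k * g k :=
    integral_eq_sum μ a b X hXmeas hXI
  have hqsum : ∑ k ∈ Finset.Icc a b, q k = 1 := by
    have h1 := sum_meas_eq_one μ a b X hXmeas hXI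
    have h2 : (∑ k ∈ Finset.Icc a b, μ {ω | X ω = k}).toReal
        = ∑ k ∈ Finset.Icc a b, q k := ENNReal.toReal_sum fun k _ => hne k
    rw [h1] at h2
    simpa using h2.symm
  constructor
  · -- forward
    intro hp f hf
    have hqp : ∀ k ∈ Finset.Icc a b, q k = p k := by
      intro k hk
      rw [Finset.mem_Icc] at hk
      rw [hq]
      simp only [hp k]
      exact ENNReal.toReal_ofReal (hpos k hk.1 hk.2).le
    have hpb1 : p (b + 1) = 0 := hzero _ (by omega)
    calc ∫ ω, (f (X ω) - f (X ω - 1) + ψ (X ω) * f (X ω)) ∂μ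
        = ∑ k ∈ Finset.Icc a b, q k * (f k - f (k - 1) + ψ k * f k) :=
          hint (fun k => f k - f (k - 1) + ψ k * f k)
      _ = ∑ k ∈ Finset.Icc a b,
            ((fun k => p k * f (k - 1)) (k + 1) - (fun k => p k * f (k - 1)) k) := by
          refine Finset.sum_congr rfl fun k hk => ?_
          rw [Finset.mem_Icc] at hk
          have hpk := hpos k hk.1 hk.2
          rw [hqp k (Finset.mem_Icc.mpr hk), hψ k]
          simp only [add_sub_cancel_right]
          field_simp
          ring
      _ = (fun k => p k * f (k - 1)) (b + 1) - (fun k => p k * f (k - 1)) a :=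
          icc_telescope a b hab (fun k => p k * f (k - 1))
      _ = 0 := by simp only []; rw [hpb1, hf]; ring
  · -- reverse
    intro hE
    have hpa := hpos a le_rfl hab
    have rel : ∀ j, a ≤ j → j < b → q (j + 1) * p j = q j * p (j + 1) := by
      intro j hja hjb
      set f : ℤ → ℝ := fun k => if k = j then (1 : ℝ) else 0 with hfdef
      have hf : f (a - 1) = 0 := by simp only [hfdef]; rw [if_neg (by omega)]
      have h0 : ∑ k ∈ Finset.Icc a b, q k * (f k - f (k - 1) + ψ k * f k) = 0 :=
        (hint (fun k => f k - f (k - 1) + ψ k * f k)).symm.trans (hE f hf)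
      have hterm : ∀ k ∈ Finset.Icc a b,
          q k * (f k - f (k - 1) + ψ k * f k)
            = (if k = j then q j * (1 + ψ j) else 0)
              - (if k = j + 1 then q (j + 1) else 0) := by
        intro k hk
        simp only [hfdef]
        rcases eq_or_ne k j with h | h
        · subst h
          rw [if_pos rfl, if_pos rfl, if_neg (by omega), if_neg (by omega)]
          ring
        · rcases eq_or_ne k (j + 1) with h' | h'
          · subst h'
            rw [if_neg h, if_neg h, if_pos (by omega), if_pos rfl]
            ring
          · rw [if_neg h, if_neg h, if_neg (by omega), if_neg h']
            ring
      rw [Finset.sum_congr rfl hterm, Finset.sum_sub_distrib,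
        Finset.sum_ite_eq' _ j, Finset.sum_ite_eq' _ (j + 1),
        if_pos (Finset.mem_Icc.mpr ⟨hja, by omega⟩),
        if_pos (Finset.mem_Icc.mpr ⟨by omega, by omega⟩)] at h0
      have hpj := hpos j hja (by omega)
      rw [hψ j] at h0
      field_simp at h0
      linarith [h0]
    have key : ∀ j, a ≤ j → j ≤ b → q j * p a = q a * p j := by
      intro j hj
      refine Int.le_induction (motive := fun j _ => j ≤ b → q j * p a = q a * p j) ?_ ?_ j hj
      · intro _; ring
      · intro j hj ih hjb
        have hjb' : j ≤ b := by omega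
        have h1 := ih hjb'
        have h2 := rel j hj (by omega)
        have hpj := hpos j hj hjb'
        have hmain : q (j + 1) * p a * p j = q a * p (j + 1) * p j := by
          calc q (j + 1) * p a * p j = (q (j + 1) * p j) * p a := by ring
            _ = (q j * p (j + 1)) * p a := by rw [h2]
            _ = (q j * p a) * p (j + 1) := by ring
            _ = (q a * p j) * p (j + 1) := by rw [h1]
            _ = q a * p (j + 1) * p j := by ring
        exact mul_right_cancel₀ hpj.ne' hmain
    have hqa : q a = p a := by
      have hs : (∑ k ∈ Finset.Icc a b, q k) * p a = q a * ∑ k ∈ Finset.Icc a b, p k := by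
        rw [Finset.sum_mul, Finset.mul_sum]
        refine Finset.sum_congr rfl fun k hk => ?_
        rw [Finset.mem_Icc] at hk
        exact key k hk.1 hk.2
      rw [hqsum, hsum, one_mul, mul_one] at hs
      exact hs.symm
    intro k
    by_cases hk : a ≤ k ∧ k ≤ b
    · have hqk : q k = p k := by
        have h1 := key k hk.1 hk.2
        rw [hqa] at h1
        exact mul_right_cancel₀ hpa.ne' (by linarith [h1] : q k * p a = p k * p a)
      calc μ {ω | X ω = k} = ENNReal.ofReal (q k) := (ENNReal.ofReal_toReal (hne k)).symm
        _ = ENNReal.ofReal (p k) := by rw [hqk]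
    · have hempty : {ω | X ω = k} = ∅ := by
        ext ω
        simp only [Set.mem_setOf_eq, Set.mem_empty_iff_false, iff_false]
        intro h
        exact hk ⟨h ▸ (hXI ω).1, h ▸ (hXI ω).2⟩
      rw [hempty, hzero k hk]
      simp
end

section
/- (Generalized discrete Stein characterization with weight c) Let p be a probability mass function strictly positive exactly on I = [a,b] ∩ ℤ, ψ(k) = (p(k+1)-p(k))/p(k), and let c : [a-1, b] ∩ ℤ → ℝ \ {0} be an arbitrary nonvanishing function. Then a random variable X with values in I has probability mass function p if and only if for all f : ℤ → ℝ with f(a-1) = 0, E[ c(X-1)(f(X) - f(X-1)) + (c(X)ψ(X) + c(X) - c(X-1)) f(X) ] = 0. -/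
open MeasureTheory

lemma icc_succ_right (a n : ℤ) (h : a ≤ n + 1) :
    Finset.Icc a (n + 1) = insert (n + 1) (Finset.Icc a n) := by
  ext k; simp [Finset.mem_Icc]; omega

lemma tele (a : ℤ) (g : ℤ → ℝ) :
    ∀ b : ℤ, a ≤ b → ∑ k ∈ Finset.Icc a b, (g k - g (k - 1)) = g b - g (a - 1) := by
  refine Int.le_induction ?_ ?_
  · simp
  · intro n hn ih
    rw [icc_succ_right a n (by omega), Finset.sum_insert (by simp), ih]
    have h1 : (n : ℤ) + 1 - 1 = n := by ring
    rw [h1]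
    ring

lemma int_eq {Ω : Type*} [MeasurableSpace Ω] (μ : Measure Ω) [IsProbabilityMeasure μ]
    (a b : ℤ) (X : Ω → ℤ) (hX : Measurable X) (hXI : ∀ ω, a ≤ X ω ∧ X ω ≤ b)
    (G : ℤ → ℝ) :
    ∫ ω, G (X ω) ∂μ = ∑ k ∈ Finset.Icc a b, (μ {ω | X ω = k}).toReal * G k := by
  have hmeas : ∀ k : ℤ, MeasurableSet {ω | X ω = k} :=
    fun k => hX (measurableSet_singleton k)
  have hfun : ∀ ω, G (X ω) =
      ∑ k ∈ Finset.Icc a b, Set.indicator {ω' | X ω' = k} (fun _ => G k) ω := by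
    intro ω
    rw [Finset.sum_eq_single (X ω)]
    · simp [Set.indicator]
    · intro k _ hk
      simp only [Set.indicator, Set.mem_setOf_eq]
      rw [if_neg (fun h => hk h.symm)]
    · intro h
      exact absurd (Finset.mem_Icc.2 ⟨(hXI ω).1, (hXI ω).2⟩) h
  calc ∫ ω, G (X ω) ∂μ
      = ∫ ω, ∑ k ∈ Finset.Icc a b,
          Set.indicator {ω' | X ω' = k} (fun _ => G k) ω ∂μ := by
        exact integral_congr_ae (Filter.Eventually.of_forall hfun)
    _ = ∑ k ∈ Finset.Icc a b,
          ∫ ω, Set.indicator {ω' | X ω' = k} (fun _ => G k) ω ∂μ := by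
        refine integral_finset_sum _ (fun k _ => ?_)
        exact (integrable_const (G k)).indicator (hmeas k)
    _ = ∑ k ∈ Finset.Icc a b, (μ {ω | X ω = k}).toReal * G k := by
        refine Finset.sum_congr rfl (fun k _ => ?_)
        rw [integral_indicator_const (G k) (hmeas k)]
        simp [mul_comm, Measure.real]

/-- generalized discrete Stein characterization with weight `c`:
with `p`, `ψ` as before and `c` nonvanishing on `[a-1, b] ∩ ℤ`,
`X` has pmf `p` iff
`E[c(X-1)(f(X) - f(X-1)) + (c(X)ψ(X) + c(X) - c(X-1)) f(X)] = 0`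
for all `f : ℤ → ℝ` with `f(a-1) = 0`. -/
theorem stmt9 {Ω : Type*} [MeasurableSpace Ω] (μ : Measure Ω) [IsProbabilityMeasure μ]
    (a b : ℤ) (hab : a ≤ b) (p : ℤ → ℝ)
    (hpos : ∀ k, a ≤ k → k ≤ b → 0 < p k)
    (hzero : ∀ k, ¬(a ≤ k ∧ k ≤ b) → p k = 0)
    (hsum : ∑ k ∈ Finset.Icc a b, p k = 1)
    (ψ : ℤ → ℝ) (hψ : ∀ k, ψ k = (p (k + 1) - p k) / p k)
    (c : ℤ → ℝ) (hc : ∀ k, a - 1 ≤ k → k ≤ b → c k ≠ 0)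
    (X : Ω → ℤ) (hXmeas : Measurable X)
    (hXI : ∀ ω, a ≤ X ω ∧ X ω ≤ b) :
    (∀ k : ℤ, μ {ω | X ω = k} = ENNReal.ofReal (p k)) ↔
      (∀ f : ℤ → ℝ, f (a - 1) = 0 →
        ∫ ω, (c (X ω - 1) * (f (X ω) - f (X ω - 1)) +
          (c (X ω) * ψ (X ω) + c (X ω) - c (X ω - 1)) * f (X ω)) ∂μ = 0) := by
  set q : ℤ → ℝ := fun k => (μ {ω | X ω = k}).toReal with hq
  have hint : ∀ f : ℤ → ℝ,
      ∫ ω, (c (X ω - 1) * (f (X ω) - f (X ω - 1)) +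
        (c (X ω) * ψ (X ω) + c (X ω) - c (X ω - 1)) * f (X ω)) ∂μ =
      ∑ k ∈ Finset.Icc a b, q k *
        (c (k - 1) * (f k - f (k - 1)) + (c k * ψ k + c k - c (k - 1)) * f k) := by
    intro f
    exact int_eq μ a b X hXmeas hXI
      (fun k => c (k - 1) * (f k - f (k - 1)) + (c k * ψ k + c k - c (k - 1)) * f k)
  have hqsum : ∑ k ∈ Finset.Icc a b, q k = 1 := by
    have h1 := int_eq μ a b X hXmeas hXI (fun _ => (1 : ℝ))
    simpa using h1.symm
  constructor
  · -- forward
    intro hX f hf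
    have hqp : ∀ k ∈ Finset.Icc a b, q k = p k := by
      intro k hk
      rw [Finset.mem_Icc] at hk
      rw [hq]
      simp only [hX k]
      exact ENNReal.toReal_ofReal (hpos k hk.1 hk.2).le
    rw [hint f]
    have key : ∀ k ∈ Finset.Icc a b,
        q k * (c (k - 1) * (f k - f (k - 1)) + (c k * ψ k + c k - c (k - 1)) * f k) =
        (c k * p (k + 1) * f k) - (c (k - 1) * p ((k - 1) + 1) * f (k - 1)) := by
      intro k hk
      rw [Finset.mem_Icc] at hk
      rw [hqp k (Finset.mem_Icc.2 hk), hψ k]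
      have hp : p k ≠ 0 := (hpos k hk.1 hk.2).ne'
      field_simp
      ring
    rw [Finset.sum_congr rfl key,
      tele a (fun k => c k * p (k + 1) * f k) b hab]
    have hpb : p (b + 1) = 0 := hzero (b + 1) (by omega)
    rw [hpb, hf]
    ring
  · -- reverse
    intro hE
    -- ratio recursion
    have hrec : ∀ j : ℤ, a ≤ j → j ≤ b - 1 → q (j + 1) = q j * p (j + 1) / p j := by
      intro j hj1 hj2
      set f : ℤ → ℝ := fun k => if k = j then 1 / c j else 0 with hfdef
      have hfj : f j = 1 / c j := if_pos rfl
      have hfne : ∀ m : ℤ, m ≠ j → f m = 0 := fun m hm => if_neg hm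
      have hf0 : f (a - 1) = 0 := hfne _ (by omega)
      have := hE f hf0
      rw [hint f] at this
      have hcj : c j ≠ 0 := hc j (by omega) (by omega)
      -- each term simplifies
      have hterm : ∀ k ∈ Finset.Icc a b,
          q k * (c (k - 1) * (f k - f (k - 1)) + (c k * ψ k + c k - c (k - 1)) * f k) =
          (if k = j then q j * (ψ j + 1) else 0) + (if k = j + 1 then -q (j + 1) else 0) := by
        intro k hk
        rcases eq_or_ne k j with rfl | hkj
        · rw [if_pos rfl, if_neg (by omega), hfj, hfne (k - 1) (by omega)]
          field_simp
          ring
        · rcases eq_or_ne k (j + 1) with rfl | hkj1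
          · rw [if_neg hkj, if_pos rfl, hfne _ hkj]
            have : (j + 1 : ℤ) - 1 = j := by ring
            rw [this, hfj]
            field_simp
            ring
          · rw [if_neg hkj, if_neg hkj1, hfne _ hkj, hfne (k - 1) (by omega)]
            ring
      rw [Finset.sum_congr rfl hterm, Finset.sum_add_distrib,
        Finset.sum_ite_eq' _ j, Finset.sum_ite_eq' _ (j + 1),
        if_pos (Finset.mem_Icc.2 ⟨hj1, by omega⟩),
        if_pos (Finset.mem_Icc.2 ⟨by omega, by omega⟩)] at this
      have hpj : p j ≠ 0 := (hpos j hj1 (by omega)).ne'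
      rw [hψ j] at this
      field_simp at this ⊢
      linarith [this]
    -- q k = (q a / p a) * p k on Icc
    have hpa : p a ≠ 0 := (hpos a le_rfl hab).ne'
    have hprop : ∀ k : ℤ, a ≤ k → k ≤ b → q k = (q a / p a) * p k := by
      refine Int.le_induction ?_ ?_
      · intro _; field_simp
      · intro n hn ih hnb
        have hn2 : n ≤ b - 1 := by omega
        rw [hrec n hn hn2, ih (by omega)]
        have hpn : p n ≠ 0 := (hpos n hn (by omega)).ne'
        field_simp
    have hr1 : q a / p a = 1 := by
      have : ∑ k ∈ Finset.Icc a b, q k = (q a / p a) * ∑ k ∈ Finset.Icc a b, p k := by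
        rw [Finset.mul_sum]
        refine Finset.sum_congr rfl (fun k hk => ?_)
        rw [Finset.mem_Icc] at hk
        exact hprop k hk.1 hk.2
      rw [hqsum, hsum, mul_one] at this
      exact this.symm
    intro k
    by_cases hk : a ≤ k ∧ k ≤ b
    · have : q k = p k := by rw [hprop k hk.1 hk.2, hr1, one_mul]
      have hne : μ {ω | X ω = k} ≠ ⊤ := measure_ne_top μ _
      rw [← ENNReal.ofReal_toReal hne]
      exact congrArg ENNReal.ofReal this
    · have hempty : {ω | X ω = k} = ∅ := by
        ext ω
        simp only [Set.mem_setOf_eq, Set.mem_empty_iff_false, iff_false]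
        intro h
        exact hk ⟨h ▸ (hXI ω).1, h ▸ (hXI ω).2⟩
      rw [hempty, measure_empty, hzero k hk, ENNReal.ofReal_zero]
end

section
/- (Stein identity for the discrete arcsine law) Let R_m have the Chung–Feller distribution P(R_m = k) = 2^{-2m} C(2k,k) C(2m-2k, m-k) on {0,...,m}. A random variable X with values in {0,...,m} has this distribution if and only if for every f : ℤ → ℝ with f(-1) = 0, E[ X((m - X) + 1/2)(f(X) - f(X-1)) + (m/2 - X) f(X) ] = 0. -/
open MeasureTheory
open Finset


lemma cb_sym_sum (n : ℕ) :
    ∑ k ∈ range (n+1), 2 * k * (Nat.centralBinom k * Nat.centralBinom (n - k)) =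
      n * ∑ k ∈ range (n+1), Nat.centralBinom k * Nat.centralBinom (n - k) := by
  have hrefl : ∑ k ∈ range (n+1), 2 * (n - k) * (Nat.centralBinom k * Nat.centralBinom (n - k)) =
      ∑ k ∈ range (n+1), 2 * k * (Nat.centralBinom k * Nat.centralBinom (n - k)) := by
    have := Finset.sum_range_reflect
      (fun k => 2 * k * (Nat.centralBinom k * Nat.centralBinom (n - k))) (n+1)
    rw [← this]
    apply Finset.sum_congr rfl
    intro k hk
    simp only [Finset.mem_range] at hk
    have hk' : k ≤ n := by omega
    have h1 : n + 1 - 1 - k = n - k := by omega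
    have h2 : n - (n - k) = k := by omega
    rw [h1, h2, mul_comm (Nat.centralBinom (n-k))]
  have hadd : ∑ k ∈ range (n+1), 2 * k * (Nat.centralBinom k * Nat.centralBinom (n - k)) +
      ∑ k ∈ range (n+1), 2 * (n - k) * (Nat.centralBinom k * Nat.centralBinom (n - k)) =
      2 * n * ∑ k ∈ range (n+1), Nat.centralBinom k * Nat.centralBinom (n - k) := by
    rw [← Finset.sum_add_distrib, Finset.mul_sum]
    apply Finset.sum_congr rfl
    intro k hk
    simp only [Finset.mem_range] at hk
    have : 2 * k + 2 * (n - k) = 2 * n := by omega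
    rw [← add_mul, this]
  have h2 : 2 * ∑ k ∈ range (n+1), 2 * k * (Nat.centralBinom k * Nat.centralBinom (n - k)) =
      2 * (n * ∑ k ∈ range (n+1), Nat.centralBinom k * Nat.centralBinom (n - k)) := by
    rw [two_mul]
    rw [← hrefl] at hadd ⊢
    rw [hadd]; ring
  exact Nat.eq_of_mul_eq_mul_left (by norm_num) h2
lemma cb_conv (n : ℕ) :
    ∑ k ∈ range (n+1), Nat.centralBinom k * Nat.centralBinom (n - k) = 4 ^ n := by
  induction n with
  | zero => simp [Nat.centralBinom]
  | succ n ih =>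
    set S := ∑ k ∈ range (n+1), Nat.centralBinom k * Nat.centralBinom (n - k) with hS
    set S' := ∑ k ∈ range (n+2), Nat.centralBinom k * Nat.centralBinom (n + 1 - k) with hS'
    have h1 : (n+1) * S' =
        ∑ k ∈ range (n+2), 2 * k * (Nat.centralBinom k * Nat.centralBinom (n + 1 - k)) :=
      (cb_sym_sum (n+1)).symm
    have h2 : ∑ k ∈ range (n+2), 2 * k * (Nat.centralBinom k * Nat.centralBinom (n + 1 - k)) =
        ∑ j ∈ range (n+1), (8 * j + 4) * (Nat.centralBinom j * Nat.centralBinom (n - j)) := by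
      rw [Finset.sum_range_succ' (fun k => 2 * k * (Nat.centralBinom k * Nat.centralBinom (n + 1 - k))) (n+1)]
      simp only [Nat.mul_zero, Nat.zero_mul, Nat.succ_sub_succ, add_zero, mul_zero, zero_mul]
      apply Finset.sum_congr rfl
      intro j hj
      have hc := Nat.succ_mul_centralBinom_succ j
      calc 2 * (j + 1) * (Nat.centralBinom (j+1) * Nat.centralBinom (n - j))
          = 2 * ((j + 1) * Nat.centralBinom (j+1)) * Nat.centralBinom (n - j) := by ring
        _ = 2 * (2 * (2 * j + 1) * Nat.centralBinom j) * Nat.centralBinom (n - j) := by rw [hc]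
        _ = (8 * j + 4) * (Nat.centralBinom j * Nat.centralBinom (n - j)) := by ring
    have h3 : ∑ j ∈ range (n+1), (8 * j + 4) * (Nat.centralBinom j * Nat.centralBinom (n - j)) =
        4 * (∑ j ∈ range (n+1), 2 * j * (Nat.centralBinom j * Nat.centralBinom (n - j))) + 4 * S := by
      rw [Finset.mul_sum, Finset.mul_sum, ← Finset.sum_add_distrib]
      apply Finset.sum_congr rfl
      intro j hj
      ring
    have h4 : (n+1) * S' = (n+1) * (4 * S) := by
      rw [h1, h2, h3, cb_sym_sum n, ← hS]; ring
    have h5 : S' = 4 * S := Nat.eq_of_mul_eq_mul_left (by omega) h4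
    rw [h5, ih]; ring

lemma cb_ratio (j n : ℕ) :
    ((2*j+1) * (n+1) : ℝ) * ((Nat.centralBinom j : ℝ) * (Nat.centralBinom (n+1) : ℝ)) =
      ((j+1) * (2*n+1) : ℝ) * ((Nat.centralBinom (j+1) : ℝ) * (Nat.centralBinom n : ℝ)) := by
  have h1 : ((j:ℝ)+1) * (Nat.centralBinom (j+1) : ℝ) = 2*(2*(j:ℝ)+1) * (Nat.centralBinom j : ℝ) := by
    exact_mod_cast congrArg (Nat.cast : ℕ → ℝ) (Nat.succ_mul_centralBinom_succ j)
  have h2 : ((n:ℝ)+1) * (Nat.centralBinom (n+1) : ℝ) = 2*(2*(n:ℝ)+1) * (Nat.centralBinom n : ℝ) := by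
    exact_mod_cast congrArg (Nat.cast : ℕ → ℝ) (Nat.succ_mul_centralBinom_succ n)
  linear_combination (2*(j:ℝ)+1) * (Nat.centralBinom j : ℝ) * h2 -
    (2*(n:ℝ)+1) * (Nat.centralBinom n : ℝ) * h1

lemma aux_uniq (m : ℕ) (p q : ℕ → ℝ)
    (hqpos : ∀ k, k ≤ m → 0 < q k)
    (hrp : ∀ j, j < m → p j * ((2*(j:ℝ)+1) * ((m:ℝ)-j)) = p (j+1) * (((j:ℝ)+1)*(2*(m:ℝ)-2*j-1)))
    (hrq : ∀ j, j < m → q j * ((2*(j:ℝ)+1) * ((m:ℝ)-j)) = q (j+1) * (((j:ℝ)+1)*(2*(m:ℝ)-2*j-1)))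
    (hsum : ∑ k ∈ range (m+1), p k = ∑ k ∈ range (m+1), q k) :
    ∀ k, k ≤ m → p k = q k := by
  have hq0 : q 0 ≠ 0 := ne_of_gt (hqpos 0 (Nat.zero_le m))
  set t : ℝ := p 0 / q 0 with ht
  have key : ∀ k, k ≤ m → p k = t * q k := by
    intro k
    induction k with
    | zero => intro _; rw [ht, div_mul_cancel₀ _ hq0]
    | succ k ihk =>
      intro hk
      have hkm : k < m := by omega
      have ih := ihk (by omega)
      have hd : (((k:ℝ)+1)*(2*(m:ℝ)-2*k-1)) ≠ 0 := by
        have h1 : (0:ℝ) < (k:ℝ)+1 := by positivity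
        have h2 : (0:ℝ) < 2*(m:ℝ)-2*k-1 := by
          have : (k:ℝ) + 1 ≤ (m:ℝ) := by exact_mod_cast hkm
          linarith
        positivity
      have e1 := hrp k hkm
      have e2 := hrq k hkm
      have : p (k+1) * (((k:ℝ)+1)*(2*(m:ℝ)-2*k-1)) = t * q (k+1) * (((k:ℝ)+1)*(2*(m:ℝ)-2*k-1)) := by
        rw [← e1, ih]
        linear_combination t * e2
      exact mul_right_cancel₀ hd this
  have hsq : 0 < ∑ k ∈ range (m+1), q k := by
    apply Finset.sum_pos
    · intro k hk; exact hqpos k (by simpa [Nat.lt_succ_iff] using hk)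
    · exact nonempty_range_add_one
  have hps : ∑ k ∈ range (m+1), p k = t * ∑ k ∈ range (m+1), q k := by
    rw [Finset.mul_sum]
    apply Finset.sum_congr rfl
    intro k hk
    exact key k (by simpa [Nat.lt_succ_iff] using hk)
  have ht1 : t = 1 := by
    have : t * ∑ k ∈ range (m+1), q k = 1 * ∑ k ∈ range (m+1), q k := by
      rw [← hps, hsum, one_mul]
    exact mul_right_cancel₀ (ne_of_gt hsq) this
  intro k hk
  rw [key k hk, ht1, one_mul]

lemma int_comp {Ω : Type*} [MeasurableSpace Ω] (μ : Measure Ω) [IsProbabilityMeasure μ]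
    (m : ℕ) (X : Ω → ℤ) (hXmeas : Measurable X)
    (hXI : ∀ ω, 0 ≤ X ω ∧ X ω ≤ m) (h : ℤ → ℝ) :
    ∫ ω, h (X ω) ∂μ =
      ∑ k ∈ range (m+1), (μ {ω | X ω = (k:ℤ)}).toReal * h (k:ℤ) := by
  have hms : ∀ k : ℕ, MeasurableSet {ω | X ω = (k:ℤ)} := by
    intro k
    exact hXmeas (measurableSet_singleton (k:ℤ))
  have hfun : (fun ω => h (X ω)) = fun ω =>
      ∑ k ∈ range (m+1), Set.indicator {ω' | X ω' = (k:ℤ)} (fun _ => h (k:ℤ)) ω := by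
    funext ω
    obtain ⟨h0, h1⟩ := hXI ω
    have hx : X ω = ((X ω).toNat : ℤ) := (Int.toNat_of_nonneg h0).symm
    have hmem : (X ω).toNat ∈ range (m+1) := by
      simp only [Finset.mem_range]; omega
    rw [Finset.sum_eq_single_of_mem (X ω).toNat hmem]
    · rw [Set.indicator_of_mem (by exact hx) (fun _ => h (((X ω).toNat : ℕ):ℤ))]
      rw [← hx]
    · intro b _ hb
      apply Set.indicator_of_notMem
      simp only [Set.mem_setOf_eq]
      omega
  rw [hfun, integral_finset_sum]
  · apply Finset.sum_congr rfl
    intro k _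
    rw [integral_indicator_const _ (hms k), smul_eq_mul, measureReal_def]
  · intro k _
    exact (integrable_const (h (k:ℤ))).indicator (hms k)

lemma stein_sum (m : ℕ) (p : ℕ → ℝ) (f : ℤ → ℝ) (hf : f (-1) = 0) :
    ∑ k ∈ range (m+1), p k * ((k:ℝ) * (((m:ℝ) - (k:ℝ)) + 1/2) * (f (k:ℤ) - f ((k:ℤ) - 1)) +
        ((m:ℝ)/2 - (k:ℝ)) * f (k:ℤ)) =
      ∑ j ∈ range m, (p j * ((j:ℝ) * (((m:ℝ) - (j:ℝ)) + 1/2) + (m:ℝ)/2 - (j:ℝ)) -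
        p (j+1) * (((j:ℝ)+1) * (((m:ℝ) - ((j:ℝ)+1)) + 1/2))) * f (j:ℤ) := by
  have hsplit : ∀ k : ℕ, p k * ((k:ℝ) * (((m:ℝ) - (k:ℝ)) + 1/2) * (f (k:ℤ) - f ((k:ℤ) - 1)) +
      ((m:ℝ)/2 - (k:ℝ)) * f (k:ℤ)) =
      p k * ((k:ℝ) * (((m:ℝ) - (k:ℝ)) + 1/2) + (m:ℝ)/2 - (k:ℝ)) * f (k:ℤ) -
      p k * ((k:ℝ) * (((m:ℝ) - (k:ℝ)) + 1/2)) * f ((k:ℤ) - 1) := by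
    intro k; ring
  simp only [hsplit]
  rw [Finset.sum_sub_distrib]
  -- first sum : peel off last term (which is zero)
  have hA : ∑ k ∈ range (m+1), p k * ((k:ℝ) * (((m:ℝ) - (k:ℝ)) + 1/2) + (m:ℝ)/2 - (k:ℝ)) * f (k:ℤ) =
      ∑ j ∈ range m, p j * ((j:ℝ) * (((m:ℝ) - (j:ℝ)) + 1/2) + (m:ℝ)/2 - (j:ℝ)) * f (j:ℤ) := by
    rw [Finset.sum_range_succ]
    have hz : ((m:ℝ) * (((m:ℝ) - (m:ℝ)) + 1/2) + (m:ℝ)/2 - (m:ℝ)) = 0 := by ring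
    rw [hz]
    simp
  -- second sum : peel off first term (which is zero)
  have hB : ∑ k ∈ range (m+1), p k * ((k:ℝ) * (((m:ℝ) - (k:ℝ)) + 1/2)) * f ((k:ℤ) - 1) =
      ∑ j ∈ range m, p (j+1) * (((j:ℝ)+1) * (((m:ℝ) - ((j:ℝ)+1)) + 1/2)) * f (j:ℤ) := by
    rw [Finset.sum_range_succ' (fun k => p k * ((k:ℝ) * (((m:ℝ) - (k:ℝ)) + 1/2)) * f ((k:ℤ) - 1)) m]
    have h0 : p 0 * (((0:ℕ):ℝ) * (((m:ℝ) - ((0:ℕ):ℝ)) + 1/2)) * f (((0:ℕ):ℤ) - 1) = 0 := by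
      push_cast
      ring
    rw [h0, add_zero]
    apply Finset.sum_congr rfl
    intro j _
    have hc1 : (((j+1:ℕ)):ℤ) - 1 = (j:ℤ) := by push_cast; ring
    have hc2 : (((j+1:ℕ)):ℝ) = (j:ℝ) + 1 := by push_cast; ring
    rw [hc1, hc2]
  rw [hA, hB, ← Finset.sum_sub_distrib]
  apply Finset.sum_congr rfl
  intro j _
  ring

/-- Stein identity for the discrete arcsine law:
`X` with values in `{0,…,m}` has the Chung–Feller distribution
`P(X = k) = 2^{-2m} C(2k,k) C(2m-2k, m-k)` iff for every `f : ℤ → ℝ`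
with `f(-1) = 0`,
`E[X((m - X) + 1/2)(f(X) - f(X-1)) + (m/2 - X) f(X)] = 0`. -/
theorem stmt10 {Ω : Type*} [MeasurableSpace Ω] (μ : Measure Ω) [IsProbabilityMeasure μ]
    (m : ℕ) (hm : 1 ≤ m)
    (X : Ω → ℤ) (hXmeas : Measurable X)
    (hXI : ∀ ω, 0 ≤ X ω ∧ X ω ≤ m) :
    (∀ k : ℕ, k ≤ m → μ {ω | X ω = k} =
        ((Nat.choose (2 * k) k * Nat.choose (2 * (m - k)) (m - k) : ℕ) : ENNReal) / 2 ^ (2 * m)) ↔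
      (∀ f : ℤ → ℝ, f (-1) = 0 →
        ∫ ω, ((X ω : ℝ) * (((m : ℝ) - X ω) + 1 / 2) * (f (X ω) - f (X ω - 1)) +
          ((m : ℝ) / 2 - X ω) * f (X ω)) ∂μ = 0) := by
  set p : ℕ → ℝ := fun k => (μ {ω | X ω = (k:ℤ)}).toReal with hp
  set q : ℕ → ℝ := fun k =>
    ((Nat.choose (2*k) k * Nat.choose (2*(m-k)) (m-k) : ℕ) : ℝ) / 2^(2*m) with hq
  have hA : ∀ h : ℤ → ℝ, ∫ ω, h (X ω) ∂μ = ∑ k ∈ range (m+1), p k * h (k:ℤ) :=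
    int_comp μ m X hXmeas hXI
  have hsum_p : ∑ k ∈ range (m+1), p k = 1 := by
    have h1 := hA (fun _ => (1:ℝ))
    simp only [integral_const, probReal_univ, measure_univ, ENNReal.toReal_one, smul_eq_mul, mul_one,
      one_smul, one_mul] at h1
    exact h1.symm
  have hsum_q : ∑ k ∈ range (m+1), q k = 1 := by
    simp only [hq]
    have hc : ∀ k, Nat.choose (2*k) k = Nat.centralBinom k := fun k =>
      (Nat.centralBinom_eq_two_mul_choose k).symm
    rw [← Finset.sum_div]
    have key : ∑ k ∈ range (m+1),
        ((Nat.choose (2*k) k * Nat.choose (2*(m-k)) (m-k) : ℕ) : ℝ) = 2^(2*m) := by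
      simp only [hc]
      rw [← Nat.cast_sum, cb_conv m]
      push_cast
      rw [pow_mul]
      norm_num
    rw [key, div_self (by positivity)]
  have hqpos : ∀ k, k ≤ m → 0 < q k := by
    intro k hk
    simp only [hq]
    have h1 : 0 < Nat.choose (2*k) k := Nat.choose_pos (by omega)
    have h2 : 0 < Nat.choose (2*(m-k)) (m-k) := Nat.choose_pos (by omega)
    positivity
  have hrq : ∀ j, j < m →
      q j * ((2*(j:ℝ)+1) * ((m:ℝ)-(j:ℝ))) = q (j+1) * (((j:ℝ)+1)*(2*(m:ℝ)-2*(j:ℝ)-1)) := by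
    intro j hj
    obtain ⟨n, hn⟩ : ∃ n, m = j + n + 1 := ⟨m - j - 1, by omega⟩
    have e1 : m - j = n + 1 := by omega
    have e2 : m - (j+1) = n := by omega
    have hcj : Nat.choose (2*j) j = Nat.centralBinom j :=
      (Nat.centralBinom_eq_two_mul_choose j).symm
    have hcj1 : Nat.choose (2*(j+1)) (j+1) = Nat.centralBinom (j+1) :=
      (Nat.centralBinom_eq_two_mul_choose _).symm
    have hcn : Nat.choose (2*(n+1)) (n+1) = Nat.centralBinom (n+1) :=
      (Nat.centralBinom_eq_two_mul_choose _).symm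
    have hcn0 : Nat.choose (2*n) n = Nat.centralBinom n :=
      (Nat.centralBinom_eq_two_mul_choose _).symm
    have hmr : (m:ℝ) = (j:ℝ) + (n:ℝ) + 1 := by rw [hn]; push_cast; ring
    simp only [hq, e1, e2, hcj, hcj1, hcn, hcn0, hmr]
    have key : ((Nat.centralBinom j * Nat.centralBinom (n+1) : ℕ):ℝ) *
        ((2*(j:ℝ)+1) * (((j:ℝ)+(n:ℝ)+1)-(j:ℝ))) =
        ((Nat.centralBinom (j+1) * Nat.centralBinom n : ℕ):ℝ) *
        (((j:ℝ)+1)*(2*((j:ℝ)+(n:ℝ)+1)-2*(j:ℝ)-1)) := by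
      push_cast
      linear_combination cb_ratio j n
    rw [div_mul_eq_mul_div, div_mul_eq_mul_div, key]
  have hSt : ∀ f : ℤ → ℝ, f (-1) = 0 →
      (∫ ω, ((X ω : ℝ) * (((m : ℝ) - X ω) + 1 / 2) * (f (X ω) - f (X ω - 1)) +
        ((m : ℝ) / 2 - X ω) * f (X ω)) ∂μ) =
      ∑ j ∈ range m, (p j * ((j:ℝ) * (((m:ℝ) - (j:ℝ)) + 1/2) + (m:ℝ)/2 - (j:ℝ)) -
        p (j+1) * (((j:ℝ)+1) * (((m:ℝ) - ((j:ℝ)+1)) + 1/2))) * f (j:ℤ) := by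
    intro f hf
    have h1 : (∫ ω, ((X ω : ℝ) * (((m : ℝ) - X ω) + 1 / 2) * (f (X ω) - f (X ω - 1)) +
        ((m : ℝ) / 2 - X ω) * f (X ω)) ∂μ) =
        ∑ k ∈ range (m+1), p k * ((((k:ℤ)):ℝ) * (((m:ℝ) - (((k:ℤ)):ℝ)) + 1/2) *
          (f (k:ℤ) - f ((k:ℤ) - 1)) + ((m:ℝ)/2 - (((k:ℤ)):ℝ)) * f (k:ℤ)) :=
      hA (fun x : ℤ => (x : ℝ) * (((m : ℝ) - (x:ℝ)) + 1 / 2) * (f x - f (x - 1)) +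
        ((m : ℝ) / 2 - (x:ℝ)) * f x)
    rw [h1, ← stein_sum m p f hf]
    apply Finset.sum_congr rfl
    intro k _
    push_cast
    ring
  constructor
  · -- distribution → Stein identity
    intro hdist
    have hpq : ∀ k, k ≤ m → p k = q k := by
      intro k hk
      simp only [hp, hq]
      rw [hdist k hk]
      simp [ENNReal.toReal_div]
    have hrp : ∀ j, j < m →
        p j * ((2*(j:ℝ)+1) * ((m:ℝ)-(j:ℝ))) = p (j+1) * (((j:ℝ)+1)*(2*(m:ℝ)-2*(j:ℝ)-1)) := by
      intro j hj
      rw [hpq j (by omega), hpq (j+1) (by omega)]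
      exact hrq j hj
    intro f hf
    rw [hSt f hf]
    apply Finset.sum_eq_zero
    intro j hj
    have hrec := hrp j (Finset.mem_range.1 hj)
    linear_combination (f (j:ℤ) / 2) * hrec
  · -- Stein identity → distribution
    intro hSt0
    have hrp : ∀ j, j < m →
        p j * ((2*(j:ℝ)+1) * ((m:ℝ)-(j:ℝ))) = p (j+1) * (((j:ℝ)+1)*(2*(m:ℝ)-2*(j:ℝ)-1)) := by
      intro j hj
      set f : ℤ → ℝ := fun x => if x = (j:ℤ) then 1 else 0 with hfdef
      have hf : f (-1) = 0 := by
        show (if (-1:ℤ) = (j:ℤ) then (1:ℝ) else 0) = 0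
        rw [if_neg (by omega)]
      have h0 := hSt0 f hf
      rw [hSt f hf] at h0
      rw [Finset.sum_eq_single_of_mem j (Finset.mem_range.2 hj)] at h0
      · have hfj : f (j:ℤ) = 1 := by
          show (if (j:ℤ) = (j:ℤ) then (1:ℝ) else 0) = 1
          rw [if_pos rfl]
        rw [hfj, mul_one] at h0
        linear_combination 2 * h0
      · intro b _ hb
        have hfb : f (b:ℤ) = 0 := by
          show (if (b:ℤ) = (j:ℤ) then (1:ℝ) else 0) = 0
          rw [if_neg (by exact_mod_cast hb)]
        rw [hfb, mul_zero]
    have hpq := aux_uniq m p q hqpos hrp hrq (by rw [hsum_p, hsum_q])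
    intro k hk
    have hne : (((Nat.choose (2 * k) k * Nat.choose (2 * (m - k)) (m - k) : ℕ) : ENNReal) /
        2 ^ (2 * m)) ≠ ⊤ := by
      rw [Ne, ENNReal.div_eq_top]
      push_neg
      constructor
      · intro _; positivity
      · intro h'; exact absurd h' (ENNReal.natCast_ne_top _)
    rw [← ENNReal.toReal_eq_toReal_iff' (measure_ne_top μ _) hne]
    have hL : (μ {ω | X ω = (k:ℤ)}).toReal = p k := rfl
    rw [hL, hpq k hk]
    simp [hq, ENNReal.toReal_div]
end

section
/- For the solution f_h of the arcsine Stein equation with a Lipschitz test function h, one has ‖f_h‖_∞ ≤ 2‖h'‖_∞ (supremum over [0,1]), where ‖h'‖_∞ denotes the minimal Lipschitz constant of h. -/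
open MeasureTheory

/-- The arcsine (Beta(1/2,1/2)) distribution on `[0,1]`. -/
noncomputable def arcsineMeasure : Measure ℝ :=
  MeasureTheory.volume.withDensity fun x =>
    ENNReal.ofReal
      (Set.indicator (Set.Ioo (0 : ℝ) 1) (fun x => (Real.pi * Real.sqrt (x * (1 - x)))⁻¹) x)

section ArcsineAux
open Set intervalIntegral
noncomputable def Sa (x : ℝ) : ℝ := Real.sqrt (x * (1 - x))

lemma Sa_cont : Continuous Sa := Real.continuous_sqrt.comp (by continuity)
lemma Sa_nonneg (x : ℝ) : 0 ≤ Sa x := Real.sqrt_nonneg _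
lemma Sa_symm (x : ℝ) : Sa (1 - x) = Sa x := by unfold Sa; ring_nf
lemma Sa_pos {x : ℝ} (h0 : 0 < x) (h1 : x < 1) : 0 < Sa x :=
  Real.sqrt_pos.2 (mul_pos h0 (by linarith))
lemma Sa_sq {x : ℝ} (h0 : 0 ≤ x) (h1 : x ≤ 1) : Sa x ^ 2 = x * (1 - x) := by
  unfold Sa; rw [Real.sq_sqrt (mul_nonneg h0 (by linarith))]

lemma int_Sainv_half : IntervalIntegrable (fun y => (Sa y)⁻¹) volume 0 (1/2) := by
  have hmeas : AEStronglyMeasurable (fun y => (Sa y)⁻¹) (volume.restrict (Ioc (0:ℝ) (1/2))) :=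
    (Sa_cont.measurable.inv).aestronglyMeasurable
  have hint : IntervalIntegrable (fun y : ℝ => Real.sqrt 2 * y ^ (-(1/2) : ℝ)) volume 0 (1/2) :=
    (intervalIntegrable_rpow' (by norm_num)).const_mul _
  rw [intervalIntegrable_iff_integrableOn_Ioc_of_le (by norm_num)]
  rw [intervalIntegrable_iff_integrableOn_Ioc_of_le (by norm_num)] at hint
  refine MeasureTheory.Integrable.mono hint hmeas ?_
  filter_upwards [ae_restrict_mem measurableSet_Ioc] with y hy
  have hy0 : 0 < y := hy.1
  have hy1 : y ≤ 1/2 := hy.2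
  have h1 : Real.sqrt (y/2) ≤ Sa y := by
    apply Real.sqrt_le_sqrt; nlinarith
  have h2 : (0:ℝ) < Real.sqrt (y/2) := Real.sqrt_pos.2 (by linarith)
  have h3 : (Sa y)⁻¹ ≤ (Real.sqrt (y/2))⁻¹ := by
    exact inv_anti₀ h2 h1
  have h4 : (Real.sqrt (y/2))⁻¹ = Real.sqrt 2 * y ^ (-(1/2) : ℝ) := by
    rw [show y/2 = y * 2⁻¹ by ring, Real.sqrt_mul hy0.le, Real.rpow_neg hy0.le,
      Real.sqrt_inv, Real.sqrt_eq_rpow, mul_inv, inv_inv, mul_comm]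
  rw [Real.norm_eq_abs, Real.norm_eq_abs, abs_of_nonneg (inv_nonneg.2 (Sa_nonneg y))]
  calc (Sa y)⁻¹ ≤ (Real.sqrt (y/2))⁻¹ := h3
    _ = Real.sqrt 2 * y ^ (-(1/2):ℝ) := h4
    _ ≤ |Real.sqrt 2 * y ^ (-(1/2):ℝ)| := le_abs_self _

lemma int_Sainv : IntervalIntegrable (fun y => (Sa y)⁻¹) volume 0 1 := by
  have h2 := int_Sainv_half.comp_sub_left 1
  simp only [Sa_symm] at h2
  norm_num at h2
  exact int_Sainv_half.trans h2.symm

noncomputable def Qa (x : ℝ) : ℝ := (Real.pi * Sa x)⁻¹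
lemma Qa_nonneg (x : ℝ) : 0 ≤ Qa x :=
  inv_nonneg.2 (mul_nonneg Real.pi_pos.le (Sa_nonneg x))
lemma Qa_symm (x : ℝ) : Qa (1 - x) = Qa x := by unfold Qa; rw [Sa_symm]
lemma Qa_meas : Measurable Qa := ((continuous_const.mul Sa_cont).measurable).inv
lemma Qa_eq (x : ℝ) : Qa x = Real.pi⁻¹ * (Sa x)⁻¹ := by unfold Qa; rw [mul_inv]

/-- integrability of a continuous function times `(Sa)⁻¹` on a subinterval of `[0,1]`. -/
lemma int_mul_Sainv {g : ℝ → ℝ} (hg : Continuous g) {a b : ℝ} (h0 : 0 ≤ a) (hab : a ≤ b)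
    (hb1 : b ≤ 1) : IntervalIntegrable (fun y => g y * (Sa y)⁻¹) volume a b := by
  obtain ⟨C, hC⟩ := (isCompact_Icc (a := a) (b := b)).exists_bound_of_continuousOn
    hg.continuousOn
  have hC0 : 0 ≤ C := le_trans (norm_nonneg _) (hC a (by constructor <;> linarith))
  have hsub : Set.uIcc a b ⊆ Set.uIcc (0:ℝ) 1 := by
    rw [Set.uIcc_of_le hab, Set.uIcc_of_le zero_le_one]
    exact Set.Icc_subset_Icc h0 hb1
  have hbase : IntervalIntegrable (fun y => C * (Sa y)⁻¹) volume a b :=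
    (int_Sainv.mono_set hsub).const_mul C
  rw [intervalIntegrable_iff_integrableOn_Ioc_of_le hab] at hbase ⊢
  refine MeasureTheory.Integrable.mono hbase
    ((hg.measurable.mul Sa_cont.measurable.inv).aestronglyMeasurable) ?_
  filter_upwards [ae_restrict_mem measurableSet_Ioc] with y hy
  rw [Real.norm_eq_abs, Real.norm_eq_abs, abs_mul,
    abs_of_nonneg (inv_nonneg.2 (Sa_nonneg y)), abs_mul, abs_of_nonneg hC0,
    abs_of_nonneg (inv_nonneg.2 (Sa_nonneg y))]
  have := hC y ⟨hy.1.le, hy.2⟩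
  exact mul_le_mul_of_nonneg_right (by rwa [Real.norm_eq_abs] at this)
    (inv_nonneg.2 (Sa_nonneg y))

lemma int_mul_Qa {g : ℝ → ℝ} (hg : Continuous g) {a b : ℝ} (h0 : 0 ≤ a) (hab : a ≤ b)
    (hb1 : b ≤ 1) : IntervalIntegrable (fun y => g y * Qa y) volume a b := by
  have := int_mul_Sainv (g := fun y => g y * Real.pi⁻¹) (by continuity) h0 hab hb1
  simpa [Qa_eq, mul_assoc] using this

lemma Sa_hasDeriv {x : ℝ} (h0 : 0 < x) (h1 : x < 1) :
    HasDerivAt Sa ((1 - 2 * x) / (2 * Sa x)) x := by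
  have h1' : HasDerivAt (fun y : ℝ => y * (1 - y)) (1 - 2 * x) x := by
    have := (hasDerivAt_id x).mul ((hasDerivAt_id x).const_sub 1)
    exact this.congr_deriv (by simp only [id_eq]; ring)
  have h2 := (Real.hasDerivAt_sqrt (x := x * (1 - x)) (ne_of_gt (mul_pos h0 (by linarith)))).comp x h1'
  show HasDerivAt (fun y => Real.sqrt (y * (1 - y))) ((1 - 2 * x) / (2 * Sa x)) x
  simpa [Sa, Function.comp_def, div_eq_mul_inv, mul_comm, mul_assoc, mul_left_comm] using h2

lemma ftc_Sa {b : ℝ} (hb0 : 0 ≤ b) (hb1 : b ≤ 1) :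
    ∫ y in (0:ℝ)..b, ((1 - 2 * y) / 2) * (Sa y)⁻¹ = Sa b := by
  have hderiv : ∀ x ∈ Set.Ioo 0 b, HasDerivAt Sa (((1 - 2 * x) / 2) * (Sa x)⁻¹) x := by
    intro x hx
    have := Sa_hasDeriv hx.1 (lt_of_lt_of_le hx.2 hb1)
    convert this using 1
    rw [div_eq_mul_inv, div_eq_mul_inv, mul_inv]
    ring
  have := intervalIntegral.integral_eq_sub_of_hasDerivAt_of_le hb0
    Sa_cont.continuousOn hderiv
    (int_mul_Sainv (by continuity) le_rfl hb0 hb1)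
  rw [this]
  simp [Sa]

lemma ftc_Sainv : ∫ y in (0:ℝ)..1, (Sa y)⁻¹ = Real.pi := by
  have hderiv : ∀ x ∈ Set.Ioo (0:ℝ) 1,
      HasDerivAt (fun y => Real.arcsin (2 * y - 1)) ((Sa x)⁻¹) x := by
    intro x hx
    have hne1 : 2 * x - 1 ≠ -1 := by intro hc; nlinarith [hx.1]
    have hne2 : 2 * x - 1 ≠ 1 := by intro hc; nlinarith [hx.2]
    have harc := (Real.hasDerivAt_arcsin hne1 hne2).comp x
      (((hasDerivAt_id x).const_mul 2).sub_const 1)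
    refine harc.congr_deriv ?_
    have h4 : 1 - (2 * x - 1) ^ 2 = 4 * (x * (1 - x)) := by ring
    rw [h4, show (4:ℝ) * (x * (1-x)) = 2^2 * (x * (1-x)) by norm_num,
      Real.sqrt_mul (by positivity), Real.sqrt_sq (by norm_num : (0:ℝ) ≤ 2)]
    unfold Sa
    rw [one_div, mul_inv]
    ring
  have hcont : ContinuousOn (fun y : ℝ => Real.arcsin (2 * y - 1)) (Set.Icc 0 1) :=
    (Real.continuous_arcsin.comp (by continuity)).continuousOn
  have := intervalIntegral.integral_eq_sub_of_hasDerivAt_of_le zero_le_one hcont hderiv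
    (by simpa using int_mul_Sainv (g := fun _ => (1:ℝ)) continuous_const le_rfl zero_le_one le_rfl)
  rw [this]
  norm_num [Real.arcsin_one, Real.arcsin_neg_one]

lemma Qa_total : ∫ y in (0:ℝ)..1, Qa y = 1 := by
  simp only [Qa_eq]
  rw [intervalIntegral.integral_const_mul, ftc_Sainv,
    inv_mul_cancel₀ Real.pi_ne_zero]

lemma Qa_zero : Qa 0 = 0 := by
  unfold Qa Sa
  norm_num

lemma Sa_mul_Qa_le (t : ℝ) : Sa t * Qa t ≤ Real.pi⁻¹ := by
  rcases eq_or_lt_of_le (Sa_nonneg t) with hS | hS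
  · rw [← hS, zero_mul]; positivity
  · rw [Qa_eq, ← mul_assoc, mul_comm (Sa t), mul_assoc, mul_inv_cancel₀ (ne_of_gt hS), mul_one]

/-- key comparison: for `c ≤ 1/2`, `∫_0^b (c-y) q(y) dy ≤ S b / π`. -/
lemma int_Qa_sub {a b : ℝ} (h0 : 0 ≤ a) (hab : a ≤ b) (hb1 : b ≤ 1) :
    IntervalIntegrable Qa volume a b := by
  simpa using int_mul_Qa (g := fun _ => (1:ℝ)) continuous_const h0 hab hb1

lemma keyD {b c : ℝ} (hb0 : 0 ≤ b) (hb1 : b ≤ 1) (hc : c ≤ 1/2) :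
    ∫ y in (0:ℝ)..b, (c - y) * Qa y ≤ Sa b / Real.pi := by
  have hrhs : ∫ y in (0:ℝ)..b, ((1 - 2*y)/2) * Qa y = Sa b / Real.pi := by
    simp only [Qa_eq]
    calc ∫ y in (0:ℝ)..b, ((1 - 2*y)/2) * (Real.pi⁻¹ * (Sa y)⁻¹)
        = ∫ y in (0:ℝ)..b, Real.pi⁻¹ * (((1 - 2*y)/2) * (Sa y)⁻¹) := by
          congr 1; funext y; ring
      _ = Real.pi⁻¹ * ∫ y in (0:ℝ)..b, ((1 - 2*y)/2) * (Sa y)⁻¹ :=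
          intervalIntegral.integral_const_mul _ _
      _ = Sa b / Real.pi := by rw [ftc_Sa hb0 hb1, div_eq_inv_mul]
  rw [← hrhs]
  apply intervalIntegral.integral_mono_on hb0
    (int_mul_Qa (by continuity) le_rfl hb0 hb1)
    (int_mul_Qa (by continuity) le_rfl hb0 hb1)
  intro y hy
  apply mul_le_mul_of_nonneg_right _ (Qa_nonneg y)
  linarith

lemma Mid : ∫ y in (0:ℝ)..1, y * Qa y = 1/2 := by
  have hsub := intervalIntegral.integral_comp_sub_left (fun y => y * Qa y) 1 (a := 0) (b := 1)
  norm_num at hsub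
  have heq : ∀ y : ℝ, (1 - y) * Qa (1 - y) = Qa y - y * Qa y := by
    intro y; rw [Qa_symm]; ring
  simp only [heq] at hsub
  rw [intervalIntegral.integral_sub (int_Qa_sub le_rfl zero_le_one le_rfl)
    (int_mul_Qa (g := fun y => y) (by continuity) le_rfl zero_le_one le_rfl), Qa_total] at hsub
  linarith

/-- bound on `E(t) = ∫ |t-y| q(y) dy` for `t ∈ [0,1/2]`. -/
lemma Ebound {t : ℝ} (ht0 : 0 ≤ t) (ht : t ≤ 1/2) :
    ∫ y in (0:ℝ)..1, |t - y| * Qa y ≤ (1/2 - t) + 2 * (Sa t / Real.pi) := by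
  have ht1 : t ≤ 1 := by linarith
  have habs : ∀ y : ℝ, |t - y| * Qa y = (y - t) * Qa y + 2 * (max (t - y) 0 * Qa y) := by
    intro y
    rcases le_total t y with hy | hy
    · rw [abs_of_nonpos (by linarith), max_eq_right (by linarith)]; ring
    · rw [abs_of_nonneg (by linarith), max_eq_left (by linarith)]; ring
  simp only [habs]
  have hint1 : IntervalIntegrable (fun y => (y - t) * Qa y) volume 0 1 :=
    int_mul_Qa (by continuity) le_rfl zero_le_one le_rfl
  have hint2 : IntervalIntegrable (fun y => max (t - y) 0 * Qa y) volume 0 1 :=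
    int_mul_Qa (by continuity) le_rfl zero_le_one le_rfl
  rw [intervalIntegral.integral_add hint1 ((hint2.const_mul 2))]
  have h1 : ∫ y in (0:ℝ)..1, (y - t) * Qa y = 1/2 - t := by
    have : ∀ y : ℝ, (y - t) * Qa y = y * Qa y - t * Qa y := by intro y; ring
    simp only [this]
    rw [intervalIntegral.integral_sub
      (int_mul_Qa (g := fun y => y) (by continuity) le_rfl zero_le_one le_rfl)
      ((int_Qa_sub le_rfl zero_le_one le_rfl).const_mul t),
      Mid, intervalIntegral.integral_const_mul, Qa_total, mul_one]
  have h2 : ∫ y in (0:ℝ)..1, max (t - y) 0 * Qa y ≤ Sa t / Real.pi := by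
    have hsplit : ∫ y in (0:ℝ)..1, max (t - y) 0 * Qa y
        = (∫ y in (0:ℝ)..t, max (t - y) 0 * Qa y) + ∫ y in t..1, max (t - y) 0 * Qa y := by
      rw [intervalIntegral.integral_add_adjacent_intervals
        (int_mul_Qa (by continuity) le_rfl ht0 ht1)
        (int_mul_Qa (by continuity) ht0 ht1 le_rfl)]
    have hzero : ∫ y in t..1, max (t - y) 0 * Qa y = 0 := by
      have : Set.EqOn (fun y => max (t - y) 0 * Qa y) (fun _ => (0:ℝ)) (Set.uIcc t 1) := by
        intro y hy
        rw [Set.uIcc_of_le ht1] at hy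
        simp only
        rw [max_eq_right (by linarith [hy.1]), zero_mul]
      rw [intervalIntegral.integral_congr this, intervalIntegral.integral_const, smul_zero]
    have heqt : ∫ y in (0:ℝ)..t, max (t - y) 0 * Qa y = ∫ y in (0:ℝ)..t, (t - y) * Qa y := by
      apply intervalIntegral.integral_congr
      intro y hy
      rw [Set.uIcc_of_le ht0] at hy
      simp only
      rw [max_eq_left (by linarith [hy.2])]
    rw [hsplit, hzero, add_zero, heqt]
    exact keyD ht0 ht1 ht
  rw [h1, intervalIntegral.integral_const_mul]
  linarith

lemma hdiff {h : ℝ → ℝ} {L : NNReal} (hL : LipschitzWith L h) {ν : ℝ}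
    (hν : ν = ∫ y in (0:ℝ)..1, h y * Qa y) (t : ℝ) :
    |h t - ν| ≤ L * ∫ y in (0:ℝ)..1, |t - y| * Qa y := by
  have hcont : Continuous h := hL.continuous
  have hrepr : h t - ν = ∫ y in (0:ℝ)..1, (h t - h y) * Qa y := by
    have : ∀ y : ℝ, (h t - h y) * Qa y = h t * Qa y - h y * Qa y := fun y => by ring
    simp only [this]
    rw [intervalIntegral.integral_sub ((int_Qa_sub le_rfl zero_le_one le_rfl).const_mul (h t))
      (int_mul_Qa hcont le_rfl zero_le_one le_rfl),
      intervalIntegral.integral_const_mul, Qa_total, mul_one, hν]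
  rw [hrepr]
  calc |∫ y in (0:ℝ)..1, (h t - h y) * Qa y|
      ≤ ∫ y in (0:ℝ)..1, |(h t - h y) * Qa y| :=
        intervalIntegral.abs_integral_le_integral_abs zero_le_one
    _ ≤ ∫ y in (0:ℝ)..1, (L * |t - y|) * Qa y := by
        have habs : ∀ y : ℝ, |(h t - h y) * Qa y| = |h t - h y| * Qa y := fun y => by
          rw [abs_mul, abs_of_nonneg (Qa_nonneg y)]
        simp only [habs]
        apply intervalIntegral.integral_mono_on zero_le_one
          (int_mul_Qa (continuous_abs.comp (continuous_const.sub hcont)) le_rfl zero_le_one le_rfl)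
          (int_mul_Qa (by continuity) le_rfl zero_le_one le_rfl)
        intro y _
        apply mul_le_mul_of_nonneg_right _ (Qa_nonneg y)
        have := hL.dist_le_mul t y
        rwa [Real.dist_eq, Real.dist_eq] at this
    _ = L * ∫ y in (0:ℝ)..1, |t - y| * Qa y := by
        rw [← intervalIntegral.integral_const_mul]
        congr 1; funext y; ring

lemma half_bound {h : ℝ → ℝ} {L : NNReal} (hL : LipschitzWith L h) {ν : ℝ}
    (hν : ν = ∫ y in (0:ℝ)..1, h y * Qa y) {x : ℝ} (hx0 : 0 < x) (hx : x ≤ 1/2) :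
    |(Real.pi / Sa x) * ∫ t in (0:ℝ)..x, (h t - ν) * Qa t| ≤ 2 * L := by
  have hx1 : x < 1 := by linarith
  have hcont : Continuous h := hL.continuous
  have hSx : 0 < Sa x := Sa_pos hx0 hx1
  have hπ : (0:ℝ) < Real.pi := Real.pi_pos
  -- pointwise bound on the integrand for t ∈ [0, x]
  have hpt : ∀ t ∈ Set.Icc (0:ℝ) x, |(h t - ν) * Qa t|
      ≤ (L * (1/2 - t)) * Qa t + 2 * L / Real.pi ^ 2 := by
    intro t ht
    have ht2 : t ≤ 1/2 := le_trans ht.2 hx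
    rw [abs_mul, abs_of_nonneg (Qa_nonneg t)]
    have h1 : |h t - ν| ≤ L * ∫ y in (0:ℝ)..1, |t - y| * Qa y := hdiff hL hν t
    have h2 : (L : ℝ) * ∫ y in (0:ℝ)..1, |t - y| * Qa y
        ≤ L * ((1/2 - t) + 2 * (Sa t / Real.pi)) :=
      mul_le_mul_of_nonneg_left (Ebound ht.1 ht2) L.coe_nonneg
    have h3 : |h t - ν| * Qa t ≤ (L * ((1/2 - t) + 2 * (Sa t / Real.pi))) * Qa t :=
      mul_le_mul_of_nonneg_right (le_trans h1 h2) (Qa_nonneg t)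
    refine le_trans h3 ?_
    have h4 : (L : ℝ) * ((1/2 - t) + 2 * (Sa t / Real.pi)) * Qa t
        = (L * (1/2 - t)) * Qa t + (2 * L / Real.pi) * (Sa t * Qa t) := by ring
    rw [h4]
    have h5 : (2 * L / Real.pi) * (Sa t * Qa t) ≤ (2 * L / Real.pi) * Real.pi⁻¹ :=
      mul_le_mul_of_nonneg_left (Sa_mul_Qa_le t) (by positivity)
    have h6 : (2 * (L:ℝ) / Real.pi) * Real.pi⁻¹ = 2 * L / Real.pi ^ 2 := by
      rw [pow_two]; field_simp
    linarith
  -- integrate the bound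
  have hIbound : |∫ t in (0:ℝ)..x, (h t - ν) * Qa t|
      ≤ L * (Sa x / Real.pi) + 2 * L / Real.pi ^ 2 * x := by
    calc |∫ t in (0:ℝ)..x, (h t - ν) * Qa t|
        ≤ ∫ t in (0:ℝ)..x, |(h t - ν) * Qa t| :=
          intervalIntegral.abs_integral_le_integral_abs hx0.le
      _ ≤ ∫ t in (0:ℝ)..x, ((L * (1/2 - t)) * Qa t + 2 * L / Real.pi ^ 2) := by
          have habs : ∀ t : ℝ, |(h t - ν) * Qa t| = |h t - ν| * Qa t := fun t => by
            rw [abs_mul, abs_of_nonneg (Qa_nonneg t)]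
          simp only [habs]
          apply intervalIntegral.integral_mono_on hx0.le
            (int_mul_Qa (continuous_abs.comp (hcont.sub continuous_const)) le_rfl hx0.le hx1.le)
            ((int_mul_Qa (by continuity) le_rfl hx0.le hx1.le).add
              intervalIntegrable_const)
          intro t ht
          have := hpt t ht
          rwa [habs t] at this
      _ = (∫ t in (0:ℝ)..x, (L * (1/2 - t)) * Qa t) + 2 * L / Real.pi ^ 2 * x := by
          rw [intervalIntegral.integral_add (int_mul_Qa (by continuity) le_rfl hx0.le hx1.le)
            intervalIntegrable_const, intervalIntegral.integral_const, smul_eq_mul]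
          ring
      _ ≤ L * (Sa x / Real.pi) + 2 * L / Real.pi ^ 2 * x := by
          have : ∫ t in (0:ℝ)..x, (L * (1/2 - t)) * Qa t
              = L * ∫ t in (0:ℝ)..x, (1/2 - t) * Qa t := by
            rw [← intervalIntegral.integral_const_mul]
            congr 1; funext t; ring
          rw [this]
          have := keyD (b := x) (c := 1/2) hx0.le hx1.le le_rfl
          have := mul_le_mul_of_nonneg_left this L.coe_nonneg
          linarith
  -- conclude
  rw [abs_mul, abs_of_nonneg (le_of_lt (div_pos hπ hSx))]
  have hfinal : (Real.pi / Sa x) * (L * (Sa x / Real.pi) + 2 * L / Real.pi ^ 2 * x) ≤ 2 * L := by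
    have hkey : 2 * x ≤ Real.pi * Sa x := by
      have hsq : (2 * x) ^ 2 ≤ (Real.pi * Sa x) ^ 2 := by
        rw [mul_pow, mul_pow, Sa_sq hx0.le hx1.le]
        have hπ2 : (9:ℝ) ≤ Real.pi ^ 2 := by nlinarith [Real.pi_gt_three]
        nlinarith [hπ2, mul_pos hx0 (show (0:ℝ) < 1 - x by linarith)]
      have h2x : 0 ≤ 2 * x := by linarith
      nlinarith [mul_pos hπ hSx]
    have hexp : (Real.pi / Sa x) * (L * (Sa x / Real.pi) + 2 * L / Real.pi ^ 2 * x)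
        = L + 2 * L * x / (Real.pi * Sa x) := by
      field_simp
    rw [hexp]
    have : 2 * (L:ℝ) * x / (Real.pi * Sa x) ≤ L := by
      rw [div_le_iff₀ (mul_pos hπ hSx)]
      calc 2 * (L:ℝ) * x = L * (2 * x) := by ring
        _ ≤ L * (Real.pi * Sa x) := mul_le_mul_of_nonneg_left hkey L.coe_nonneg
        _ = L * (Real.pi * Sa x) := rfl
    linarith
  exact le_trans (mul_le_mul_of_nonneg_left hIbound (le_of_lt (div_pos hπ hSx))) hfinal

lemma nu_integral (g : ℝ → ℝ) :
    ∫ y, g y ∂arcsineMeasure = ∫ y in (0:ℝ)..1, g y * Qa y := by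
  have hind : ∀ x : ℝ, ENNReal.ofReal (Set.indicator (Set.Ioo (0 : ℝ) 1)
      (fun x => (Real.pi * Real.sqrt (x * (1 - x)))⁻¹) x)
      = ((Set.indicator (Set.Ioo (0 : ℝ) 1) Qa x).toNNReal : ENNReal) := fun x => rfl
  have hmeas : Measurable fun x => (Set.indicator (Set.Ioo (0 : ℝ) 1) Qa x).toNNReal :=
    (Qa_meas.indicator measurableSet_Ioo).real_toNNReal
  have h1 : ∫ y, g y ∂arcsineMeasure
      = ∫ y, ((Set.indicator (Set.Ioo (0 : ℝ) 1) Qa y).toNNReal : ℝ) • g y := by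
    unfold arcsineMeasure
    simp only [hind]
    exact integral_withDensity_eq_integral_smul hmeas g
  rw [h1]
  have h2 : ∀ y : ℝ, ((Set.indicator (Set.Ioo (0 : ℝ) 1) Qa y).toNNReal : ℝ) • g y
      = Set.indicator (Set.Ioo (0 : ℝ) 1) (fun y => g y * Qa y) y := by
    intro y
    rw [smul_eq_mul, Real.coe_toNNReal _ (Set.indicator_nonneg (fun y _ => Qa_nonneg y) y)]
    by_cases hy : y ∈ Set.Ioo (0:ℝ) 1
    · rw [Set.indicator_of_mem hy, Set.indicator_of_mem hy, mul_comm]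
    · rw [Set.indicator_of_notMem hy, Set.indicator_of_notMem hy, zero_mul]
  simp only [h2]
  rw [MeasureTheory.integral_indicator measurableSet_Ioo,
    intervalIntegral.integral_of_le zero_le_one, MeasureTheory.integral_Ioc_eq_integral_Ioo]

/-- for Lipschitz `h` with Lipschitz constant `L`, the solution
`f_h` of the arcsine Stein equation satisfies `‖f_h‖_∞ ≤ 2 L` on `(0,1)`. -/
theorem stmt13 (h : ℝ → ℝ) (L : NNReal) (hL : LipschitzWith L h)
    (q : ℝ → ℝ) (hq : ∀ x, q x = (Real.pi * Real.sqrt (x * (1 - x)))⁻¹)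
    (νh : ℝ) (hνh : νh = ∫ y, h y ∂arcsineMeasure)
    (f : ℝ → ℝ)
    (hf : ∀ x ∈ Set.Ioo (0 : ℝ) 1,
      f x = (x * (1 - x) * q x)⁻¹ * ∫ t in Set.Ioc (0 : ℝ) x, (h t - νh) * q t) :
    ∀ x ∈ Set.Ioo (0 : ℝ) 1, |f x| ≤ 2 * L := by
  intro x hx
  obtain ⟨hx0, hx1⟩ := hx
  have hq' : q = Qa := funext fun y => hq y
  have hcont : Continuous h := hL.continuous
  have hSx : 0 < Sa x := Sa_pos hx0 hx1
  have hπ : (0:ℝ) < Real.pi := Real.pi_pos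
  have hνQ : νh = ∫ y in (0:ℝ)..1, h y * Qa y := by rw [hνh, nu_integral]
  have hcoef : (x * (1 - x) * Qa x)⁻¹ = Real.pi / Sa x := by
    have hval : x * (1 - x) * Qa x = Sa x / Real.pi := by
      rw [← Sa_sq hx0.le hx1.le]
      unfold Qa
      field_simp
    rw [hval, inv_div]
  have hfx : f x = (Real.pi / Sa x) * ∫ t in (0:ℝ)..x, (h t - νh) * Qa t := by
    rw [hf x ⟨hx0, hx1⟩, hq', hcoef, intervalIntegral.integral_of_le hx0.le]
  rw [hfx]
  rcases le_or_gt x (1/2) with hhalf | hhalf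
  · exact half_bound hL hνQ hx0 hhalf
  · -- reflection
    have hLg : LipschitzWith L (fun t => h (1 - t)) := by
      rw [lipschitzWith_iff_dist_le_mul]
      intro a b
      have := hL.dist_le_mul (1 - a) (1 - b)
      rw [Real.dist_eq, Real.dist_eq] at this ⊢
      have habs : |1 - a - (1 - b)| = |a - b| := by rw [show (1:ℝ) - a - (1 - b) = -(a - b) by ring, abs_neg]
      rw [habs] at this
      exact this
    have hνg : νh = ∫ y in (0:ℝ)..1, h (1 - y) * Qa y := by
      have hc := intervalIntegral.integral_comp_sub_left (fun y => h y * Qa y) 1 (a := 0) (b := 1)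
      norm_num at hc
      simp only [Qa_symm] at hc
      rw [hνQ, ← hc]
    have hzero : ∫ t in (0:ℝ)..1, (h t - νh) * Qa t = 0 := by
      have hexp : ∀ t : ℝ, (h t - νh) * Qa t = h t * Qa t - νh * Qa t := fun t => by ring
      simp only [hexp]
      rw [intervalIntegral.integral_sub (int_mul_Qa hcont le_rfl zero_le_one le_rfl)
        ((int_Qa_sub le_rfl zero_le_one le_rfl).const_mul νh),
        intervalIntegral.integral_const_mul, Qa_total, mul_one, hνQ, sub_self]
    have hflip : ∫ t in (0:ℝ)..(1-x), (h (1 - t) - νh) * Qa t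
        = - ∫ t in (0:ℝ)..x, (h t - νh) * Qa t := by
      have hc := intervalIntegral.integral_comp_sub_left
        (fun u => (h u - νh) * Qa u) 1 (a := 0) (b := 1 - x)
      simp only [sub_sub_cancel, sub_zero, Qa_symm] at hc
      have hadd : (∫ t in (0:ℝ)..x, (h t - νh) * Qa t)
          + ∫ t in x..1, (h t - νh) * Qa t = ∫ t in (0:ℝ)..1, (h t - νh) * Qa t :=
        intervalIntegral.integral_add_adjacent_intervals
          (int_mul_Qa (hcont.sub continuous_const) le_rfl hx0.le hx1.le)
          (int_mul_Qa (hcont.sub continuous_const) hx0.le hx1.le le_rfl)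
      rw [hzero] at hadd
      rw [hc]
      linarith
    have hres := half_bound hLg hνg (x := 1 - x) (by linarith) (by linarith)
    rw [hflip, Sa_symm, mul_neg, abs_neg] at hres
    exact hres

end ArcsineAux
end
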